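/- arXiv:1412.8073 — 11 statements merged into one kernel-verified Lean document; each statement's English description precedes it below -/
import Mathlib

section
/- Let μ : ℝ → ℂ be measurable and 2π-periodic with ess sup |μ| < 1, and let p : [0,2π] → ℝ be measurable with p(θ) > 0 a.e. and p ∈ L²[0,2π] with ∫₀^{2π} p dθ > 0. Define a₀(θ) = |e^{2iθ} − μ(θ)|²/(1 − |μ(θ)|²) and a₁(θ) = |e^{2iθ} + μ(θ)|²/(1 − |μ(θ)|²), and set g₀ = (1/2π)∫₀^{2π} a₀(θ) dθ and g₁ = [(1/2π)∫₀^{2π} a₁(θ)p(θ)² dθ] / [(1/2π)∫₀^{2π} p(θ) dθ]². Then g₀ · g₁ ≥ 1. -/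
/-!
Pointwise, `a₀ a₁ = (‖e^{4iθ} - μ²‖ / (1 - ‖μ‖²))² ≥ 1` because `‖e^{4iθ} - μ²‖ ≥ 1 - ‖μ‖²`.
Hence `|p| ≤ √a₀ · √(a₁ p²)`, and Cauchy–Schwarz gives `(∫ p)² ≤ (∫ a₀) (∫ a₁ p²)`, which is
`g₀ g₁ ≥ 1` once the factors `1/(2π)` cancel.
-/

open MeasureTheory
open scoped Real

noncomputable def distortion (z w : ℂ) : ℝ := ‖z - w‖ ^ 2 / (1 - ‖w‖ ^ 2)

lemma distortion_nonneg (z : ℂ) {w : ℂ} (hw : ‖w‖ ≤ 1) : 0 ≤ distortion z w :=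
  div_nonneg (sq_nonneg _) (by nlinarith [norm_nonneg w])

lemma norm_distortion_le {z w : ℂ} {M : ℝ} (hz : ‖z‖ ≤ 1) (hw : ‖w‖ ≤ M) (hM : M < 1) :
    ‖distortion z w‖ ≤ 4 / (1 - M ^ 2) := by
  have hM0 : 0 ≤ M := (norm_nonneg w).trans hw
  rw [Real.norm_of_nonneg (distortion_nonneg z (hw.trans hM.le))]
  have hzw : ‖z - w‖ ≤ 2 := by linarith [norm_sub_le z w]
  exact div_le_div₀ (by norm_num) (by nlinarith [norm_nonneg (z - w)]) (by nlinarith)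
    (by nlinarith [norm_nonneg w])

lemma one_le_distortion_mul_distortion_neg {z w : ℂ} (hz : ‖z‖ = 1) (hw : ‖w‖ < 1) :
    1 ≤ distortion z w * distortion z (-w) := by
  have hD : 0 < 1 - ‖w‖ ^ 2 := by nlinarith [norm_nonneg w]
  have hprod : 1 - ‖w‖ ^ 2 ≤ ‖z - w‖ * ‖z + w‖ := by
    calc 1 - ‖w‖ ^ 2 = ‖z ^ 2‖ - ‖w ^ 2‖ := by simp [hz]
      _ ≤ ‖z ^ 2 - w ^ 2‖ := norm_sub_norm_le _ _
      _ = ‖z - w‖ * ‖z + w‖ := by rw [← norm_mul]; ring_nf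
  rw [distortion, distortion, sub_neg_eq_add, norm_neg, div_mul_div_comm, ← mul_pow, ← sq,
    one_le_div (by positivity)]
  exact pow_le_pow_left₀ hD.le hprod 2

section CauchySchwarz

variable {α : Type*} [MeasurableSpace α] {ν : Measure α}

lemma sq_integral_mul_le_integral_sq_mul_integral_sq {F G : α → ℝ} (hF0 : 0 ≤ᵐ[ν] F)
    (hG0 : 0 ≤ᵐ[ν] G) (hF : MemLp F 2 ν) (hG : MemLp G 2 ν) :
    (∫ x, F x * G x ∂ν) ^ 2 ≤ (∫ x, F x ^ 2 ∂ν) * ∫ x, G x ^ 2 ∂ν := by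
  have holder := integral_mul_le_Lp_mul_Lq_of_nonneg Real.HolderConjugate.two_two hF0 hG0
    (by simpa using hF) (by simpa using hG)
  simp only [Real.rpow_two] at holder
  have hFG : 0 ≤ ∫ x, F x * G x ∂ν :=
    integral_nonneg_of_ae (by filter_upwards [hF0, hG0] with x hFx hGx using mul_nonneg hFx hGx)
  calc (∫ x, F x * G x ∂ν) ^ 2
      ≤ ((∫ x, F x ^ 2 ∂ν) ^ (1 / 2 : ℝ) * (∫ x, G x ^ 2 ∂ν) ^ (1 / 2 : ℝ)) ^ 2 :=
        pow_le_pow_left₀ hFG holder 2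
    _ = (∫ x, F x ^ 2 ∂ν) * ∫ x, G x ^ 2 ∂ν := by
        rw [mul_pow, ← Real.sqrt_eq_rpow, ← Real.sqrt_eq_rpow,
          Real.sq_sqrt (integral_nonneg_of_ae (by filter_upwards with x using sq_nonneg _)),
          Real.sq_sqrt (integral_nonneg_of_ae (by filter_upwards with x using sq_nonneg _))]

lemma sq_integral_le_integral_mul_integral_mul_sq {f g h : α → ℝ} (hf : Integrable f ν)
    (hgh : Integrable (fun x => g x * h x ^ 2) ν) (hh : Integrable h ν) (hf0 : 0 ≤ᵐ[ν] f)
    (hg0 : 0 ≤ᵐ[ν] g) (hfg : ∀ᵐ x ∂ν, 1 ≤ f x * g x) :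
    (∫ x, h x ∂ν) ^ 2 ≤ (∫ x, f x ∂ν) * ∫ x, g x * h x ^ 2 ∂ν := by
  set F : α → ℝ := fun x => √(f x)
  set G : α → ℝ := fun x => √(g x * h x ^ 2)
  have hF2 : (fun x => F x ^ 2) =ᵐ[ν] f := by
    filter_upwards [hf0] with x hx using Real.sq_sqrt hx
  have hG2 : (fun x => G x ^ 2) =ᵐ[ν] fun x => g x * h x ^ 2 := by
    filter_upwards [hg0] with x hx using Real.sq_sqrt (mul_nonneg hx (sq_nonneg _))
  have hF : MemLp F 2 ν := (memLp_two_iff_integrable_sq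
    hf.aemeasurable.sqrt.aestronglyMeasurable).2 (hf.congr hF2.symm)
  have hG : MemLp G 2 ν := (memLp_two_iff_integrable_sq
    hgh.aemeasurable.sqrt.aestronglyMeasurable).2 (hgh.congr hG2.symm)
  -- `|h| = √(h²) ≤ √(f g h²) = F G`
  have habs_le : ∀ᵐ x ∂ν, |h x| ≤ F x * G x := by
    filter_upwards [hf0, hfg] with x hfx hfgx
    rw [← Real.sqrt_mul hfx, ← mul_assoc, ← Real.sqrt_sq_eq_abs]
    exact Real.sqrt_le_sqrt (le_mul_of_one_le_left (sq_nonneg _) hfgx)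
  have hint : |∫ x, h x ∂ν| ≤ ∫ x, F x * G x ∂ν :=
    (abs_integral_le_integral_abs).trans
      (integral_mono_ae hh.abs (hF.integrable_mul hG) habs_le)
  calc (∫ x, h x ∂ν) ^ 2 = |∫ x, h x ∂ν| ^ 2 := (sq_abs _).symm
    _ ≤ (∫ x, F x * G x ∂ν) ^ 2 := pow_le_pow_left₀ (abs_nonneg _) hint 2
    _ ≤ (∫ x, F x ^ 2 ∂ν) * ∫ x, G x ^ 2 ∂ν :=
        sq_integral_mul_le_integral_sq_mul_integral_sq
          (.of_forall fun _ => Real.sqrt_nonneg _) (.of_forall fun _ => Real.sqrt_nonneg _) hF hG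
    _ = (∫ x, f x ∂ν) * ∫ x, g x * h x ^ 2 ∂ν := by
        rw [integral_congr_ae hF2, integral_congr_ae hG2]

end CauchySchwarz

theorem stmt_0_general (μ : ℝ → ℂ) (p : ℝ → ℝ)
    (hμ_meas : Measurable μ)
    (hμ_bd : ∃ M : ℝ, M < 1 ∧ ∀ᵐ θ : ℝ ∂volume, ‖μ θ‖ ≤ M)
    (hp_L2 : IntegrableOn (fun θ => (p θ)^2) (Set.Ioc (0:ℝ) (2*π)))
    (hp_int : 0 < ∫ θ in Set.Ioc (0:ℝ) (2*π), p θ) :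
    let a₀ : ℝ → ℝ := fun θ =>
      ‖Complex.exp (2*θ*Complex.I) - μ θ‖^2 / (1 - (‖μ θ‖)^2)
    let a₁ : ℝ → ℝ := fun θ =>
      ‖Complex.exp (2*θ*Complex.I) + μ θ‖^2 / (1 - (‖μ θ‖)^2)
    let g₀ : ℝ := (1/(2*π)) * ∫ θ in Set.Ioc (0:ℝ) (2*π), a₀ θ
    let g₁ : ℝ := ((1/(2*π)) * ∫ θ in Set.Ioc (0:ℝ) (2*π), a₁ θ * (p θ)^2) /
      ((1/(2*π)) * ∫ θ in Set.Ioc (0:ℝ) (2*π), p θ)^2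
    1 ≤ g₀ * g₁ := by
  intro a₀ a₁ g₀ g₁
  simp only [g₀, g₁]
  set s := Set.Ioc (0:ℝ) (2*π)
  set e : ℝ → ℂ := fun θ => Complex.exp (2*θ*Complex.I)
  have he : ∀ θ, ‖e θ‖ = 1 := fun θ => by simp [e, Complex.norm_exp]
  have ha₁ : a₁ = fun θ => distortion (e θ) (-μ θ) := by
    funext θ; simp only [a₁, e, distortion, sub_neg_eq_add, norm_neg]
  obtain ⟨M, hM, hbd⟩ := hμ_bd
  replace hbd : ∀ᵐ θ ∂volume.restrict s, ‖μ θ‖ ≤ M := ae_restrict_of_ae hbd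
  have hmeas : ∀ ν : ℝ → ℂ, Measurable ν → Measurable fun θ => distortion (e θ) (ν θ) :=
    fun ν hν => by unfold distortion e; fun_prop
  have hint₀ : IntegrableOn a₀ s :=
    Measure.integrableOn_of_bounded measure_Ioc_lt_top.ne
      (hmeas μ hμ_meas).aestronglyMeasurable
      (by filter_upwards [hbd] with θ hθ using norm_distortion_le (he θ).le hθ hM)
  have hint₁ : IntegrableOn (fun θ => a₁ θ * p θ ^ 2) s := by
    rw [ha₁]
    exact hp_L2.bdd_mul (hmeas _ hμ_meas.neg).aestronglyMeasurable
      (by filter_upwards [hbd] with θ hθ using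
        norm_distortion_le (he θ).le ((norm_neg (μ θ)).trans_le hθ) hM)
  have key := sq_integral_le_integral_mul_integral_mul_sq hint₀ hint₁
    (Integrable.of_integral_ne_zero hp_int.ne')
    (by filter_upwards [hbd] with θ hθ using distortion_nonneg _ (hθ.trans hM.le))
    (by filter_upwards [hbd] with θ hθ using
      ha₁ ▸ distortion_nonneg _ ((norm_neg (μ θ)).trans_le (hθ.trans hM.le)))
    (by filter_upwards [hbd] with θ hθ using
      ha₁ ▸ one_le_distortion_mul_distortion_neg (he θ) (hθ.trans_lt hM))
  calc 1 ≤ (∫ θ in s, a₀ θ) * (∫ θ in s, a₁ θ * p θ ^ 2) / (∫ θ in s, p θ) ^ 2 :=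
        (one_le_div (by positivity)).2 key
    _ = _ := by field_simp

/-- the geometric factors `g₀, g₁` built from a quasiconformal dilatation `μ`
(depending only on the angle, with essential sup of its modulus less than 1) and a positive
boundary weight `p ∈ L²[0,2π]` satisfy `g₀ · g₁ ≥ 1`. -/
theorem stmt_0 (μ : ℝ → ℂ) (p : ℝ → ℝ)
    (hμ_meas : Measurable μ)
    (hμ_per : ∀ θ : ℝ, μ (θ + 2 * π) = μ θ)
    (hμ_bd : ∃ M : ℝ, M < 1 ∧ ∀ᵐ θ : ℝ ∂volume, ‖μ θ‖ ≤ M)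
    (hp_meas : Measurable p)
    (hp_pos : ∀ᵐ θ ∂(volume.restrict (Set.Ioc (0:ℝ) (2*π))), 0 < p θ)
    (hp_L2 : IntegrableOn (fun θ => (p θ)^2) (Set.Ioc (0:ℝ) (2*π)))
    (hp_int : 0 < ∫ θ in Set.Ioc (0:ℝ) (2*π), p θ) :
    let a₀ : ℝ → ℝ := fun θ =>
      ‖Complex.exp (2*θ*Complex.I) - μ θ‖^2 / (1 - (‖μ θ‖)^2)
    let a₁ : ℝ → ℝ := fun θ =>
      ‖Complex.exp (2*θ*Complex.I) + μ θ‖^2 / (1 - (‖μ θ‖)^2)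
    let g₀ : ℝ := (1/(2*π)) * ∫ θ in Set.Ioc (0:ℝ) (2*π), a₀ θ
    let g₁ : ℝ := ((1/(2*π)) * ∫ θ in Set.Ioc (0:ℝ) (2*π), a₁ θ * (p θ)^2) /
      ((1/(2*π)) * ∫ θ in Set.Ioc (0:ℝ) (2*π), p θ)^2
    1 ≤ g₀ * g₁ :=
  stmt_0_general μ p hμ_meas hμ_bd hp_L2 hp_int
end

section
/- Let μ : ℝ → ℂ be measurable and 2π-periodic with ess sup |μ| < 1, and let p : [0,2π] → ℝ be measurable with p(θ) > 0 a.e. and p ∈ L²[0,2π] with ∫₀^{2π} p dθ > 0. Define a₀(θ) = |e^{2iθ} − μ(θ)|²/(1 − |μ(θ)|²) and a₁(θ) = |e^{2iθ} + μ(θ)|²/(1 − |μ(θ)|²), g₀ = (1/2π)∫₀^{2π} a₀ dθ and g₁ = [(1/2π)∫₀^{2π} a₁ p² dθ] / [(1/2π)∫₀^{2π} p dθ]². If g₀ · g₁ = 1, then for almost every θ the number e^{−2iθ}μ(θ) is real with e^{−2iθ}μ(θ) ∈ (−1,1), and there exists a constant c > 0 such that p(θ) = c · a₀(θ) for almost every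 θ. -/
open MeasureTheory
open scoped Real

/-!
Write `w = e^{-2iθ} μ`, so that `a₀ = ‖1 - w‖² / (1 - ‖w‖²)` and `a₁` is the same expression at
`-w`. Pointwise `a₀ a₁ = (‖1 - w²‖ / (1 - ‖w‖²))² ≥ 1`, with equality exactly when `w` is real.
Since `a₀ (b u² - 2uv + a₀ v²) = (a₀ v - u)² + (a₀ b - 1) u²`, the quadratic form with `b = a₁`,
`u = (∫ a₀) p`, `v = ∫ p` is nonnegative, and its integral is `(∫ a₀)((∫ a₀)(∫ a₁ p²) - (∫ p)²)`.
So `g₀ g₁ = 1` makes it vanish a.e., which forces both `a₀ a₁ = 1` and `(∫ a₀) p = (∫ p) a₀`.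
-/

lemma mul_quadratic_eq (a b u v : ℝ) :
    a * (b * u ^ 2 - 2 * u * v + a * v ^ 2) = (a * v - u) ^ 2 + (a * b - 1) * u ^ 2 := by
  ring

section QuadraticForm

variable {a b : ℝ}

lemma quadratic_nonneg_of_one_le_mul (ha : 0 < a) (hab : 1 ≤ a * b) (u v : ℝ) :
    0 ≤ b * u ^ 2 - 2 * u * v + a * v ^ 2 := by
  refine nonneg_of_mul_nonneg_right ?_ ha
  rw [mul_quadratic_eq]
  have : 0 ≤ (a * b - 1) * u ^ 2 := mul_nonneg (by linarith) (sq_nonneg u)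
  positivity

lemma eq_of_quadratic_eq_zero_of_one_le_mul (ha : 0 < a) (hab : 1 ≤ a * b) {u v : ℝ}
    (hv : v ≠ 0) (h : b * u ^ 2 - 2 * u * v + a * v ^ 2 = 0) : u = a * v ∧ a * b = 1 := by
  have hsum : (a * v - u) ^ 2 + (a * b - 1) * u ^ 2 = 0 := by
    rw [← mul_quadratic_eq, h, mul_zero]
  have hdefect : 0 ≤ (a * b - 1) * u ^ 2 := mul_nonneg (by linarith) (sq_nonneg u)
  have hsq : (a * v - u) ^ 2 = 0 := by linarith [sq_nonneg (a * v - u)]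
  have hu : u = a * v := (sub_eq_zero.mp (pow_eq_zero_iff two_ne_zero |>.mp hsq)).symm
  have hu0 : u ≠ 0 := hu ▸ mul_ne_zero ha.ne' hv
  have hdefect0 : (a * b - 1) * u ^ 2 = 0 := by linarith
  exact ⟨hu, by linarith [(mul_eq_zero.mp hdefect0).resolve_right (pow_ne_zero 2 hu0)]⟩

end QuadraticForm

/-- Equality case of `(∫ p)² ≤ (∫ a) (∫ b p²)` for `a > 0`, `a b ≥ 1`. -/
theorem ae_mul_eq_one_and_ae_eq_of_integral_mul_integral_eq_sq {α : Type*} [MeasurableSpace α]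
    {ν : Measure α} {a b p : α → ℝ} (ha : ∀ᵐ x ∂ν, 0 < a x) (hab : ∀ᵐ x ∂ν, 1 ≤ a x * b x)
    (hp : ∫ x, p x ∂ν ≠ 0)
    (heq : (∫ x, a x ∂ν) * (∫ x, b x * p x ^ 2 ∂ν) = (∫ x, p x ∂ν) ^ 2) :
    (∀ᵐ x ∂ν, a x * b x = 1) ∧
      ∀ᵐ x ∂ν, p x = ((∫ x, p x ∂ν) / ∫ x, a x ∂ν) * a x := by
  set A := ∫ x, a x ∂ν
  set B := ∫ x, b x * p x ^ 2 ∂ν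
  set P := ∫ x, p x ∂ν
  have hAB : A * B ≠ 0 := heq ▸ pow_ne_zero 2 hp
  have hA : A ≠ 0 := left_ne_zero_of_mul hAB
  -- a non-integrable function has integral `0`
  have ia : Integrable a ν := .of_integral_ne_zero hA
  have ibp : Integrable (fun x => b x * p x ^ 2) ν :=
    .of_integral_ne_zero (right_ne_zero_of_mul hAB)
  have ip : Integrable p ν := .of_integral_ne_zero hp
  set H : α → ℝ := fun x => A ^ 2 * (b x * p x ^ 2) - 2 * A * P * p x + P ^ 2 * a x
  have hH_quad : ∀ x, H x = b x * (A * p x) ^ 2 - 2 * (A * p x) * P + a x * P ^ 2 := fun x => by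
    simp only [H]; ring
  have hH₁ : Integrable (fun x => A ^ 2 * (b x * p x ^ 2) - 2 * A * P * p x) ν :=
    (ibp.const_mul _).sub (ip.const_mul _)
  have hH_int : Integrable H ν := hH₁.add (ia.const_mul _)
  have hH_integral : ∫ x, H x ∂ν = 0 := by
    rw [integral_add hH₁ (ia.const_mul _), integral_sub (ibp.const_mul _) (ip.const_mul _),
      integral_const_mul, integral_const_mul, integral_const_mul]
    linear_combination A * heq
  have hH_nonneg : 0 ≤ᵐ[ν] H := by
    filter_upwards [ha, hab] with x hax habx
    rw [Pi.zero_apply, hH_quad]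
    exact quadratic_nonneg_of_one_le_mul hax habx _ _
  have hH_zero : H =ᵐ[ν] 0 := (integral_eq_zero_iff_of_nonneg_ae hH_nonneg hH_int).mp hH_integral
  have key : ∀ᵐ x ∂ν, A * p x = a x * P ∧ a x * b x = 1 := by
    filter_upwards [ha, hab, hH_zero] with x hax habx hx
    rw [Pi.zero_apply, hH_quad] at hx
    exact eq_of_quadratic_eq_zero_of_one_le_mul hax habx hp hx
  refine ⟨key.mono fun x hx => hx.2, key.mono fun x hx => ?_⟩
  field_simp
  linarith [hx.1]

noncomputable def beltramiWeight (w : ℂ) : ℝ := ‖1 - w‖ ^ 2 / (1 - ‖w‖ ^ 2)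

lemma one_sub_norm_sq_pos {w : ℂ} (hw : ‖w‖ < 1) : 0 < 1 - ‖w‖ ^ 2 :=
  sub_pos.mpr (pow_lt_one₀ (norm_nonneg w) hw two_ne_zero)

lemma beltramiWeight_pos {w : ℂ} (hw : ‖w‖ < 1) : 0 < beltramiWeight w := by
  have h1w : 0 < ‖1 - w‖ := by
    have := norm_sub_norm_le (1 : ℂ) w
    rw [norm_one] at this
    linarith
  have := one_sub_norm_sq_pos hw
  unfold beltramiWeight
  positivity

lemma beltramiWeight_mul_neg (w : ℂ) :
    beltramiWeight w * beltramiWeight (-w) = (‖1 - w ^ 2‖ / (1 - ‖w‖ ^ 2)) ^ 2 := by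
  rw [beltramiWeight, beltramiWeight, norm_neg, sub_neg_eq_add, div_mul_div_comm, ← mul_pow,
    ← norm_mul, div_pow, ← sq (1 - ‖w‖ ^ 2)]
  ring_nf

lemma one_sub_norm_sq_le_norm_one_sub_sq (w : ℂ) : 1 - ‖w‖ ^ 2 ≤ ‖1 - w ^ 2‖ := by
  have := norm_sub_norm_le (1 : ℂ) (w ^ 2)
  rwa [norm_one, norm_pow] at this

lemma one_le_beltramiWeight_mul_neg {w : ℂ} (hw : ‖w‖ < 1) :
    1 ≤ beltramiWeight w * beltramiWeight (-w) := by
  rw [beltramiWeight_mul_neg]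
  exact one_le_pow₀
    ((one_le_div (one_sub_norm_sq_pos hw)).mpr (one_sub_norm_sq_le_norm_one_sub_sq w))

/-- Equality in `‖1 - w²‖ ≥ 1 - ‖w‖²`: `(1 - x² + y²)² + 4x²y² - (1 - x² - y²)² = 4y²`. -/
lemma im_eq_zero_of_norm_one_sub_sq_eq {w : ℂ} (h : ‖1 - w ^ 2‖ = 1 - ‖w‖ ^ 2) : w.im = 0 := by
  have hsq : Complex.normSq (1 - w ^ 2) = (1 - Complex.normSq w) ^ 2 := by
    rw [← Complex.sq_norm, ← Complex.sq_norm w, h]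
  simp only [Complex.normSq_apply, Complex.sub_re, Complex.sub_im, Complex.one_re,
    Complex.one_im, pow_two, Complex.mul_re, Complex.mul_im] at hsq
  nlinarith [sq_nonneg w.im]

lemma im_eq_zero_of_beltramiWeight_mul_neg_eq_one {w : ℂ} (hw : ‖w‖ < 1)
    (h : beltramiWeight w * beltramiWeight (-w) = 1) : w.im = 0 := by
  have hd := one_sub_norm_sq_pos hw
  rw [beltramiWeight_mul_neg, pow_eq_one_iff_of_nonneg (by positivity) two_ne_zero,
    div_eq_one_iff_eq hd.ne'] at h
  exact im_eq_zero_of_norm_one_sub_sq_eq h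

lemma norm_exp_two_mul_I_add (θ : ℝ) (m : ℂ) :
    ‖Complex.exp (2 * θ * Complex.I) + m‖ = ‖1 + Complex.exp (-(2 * θ) * Complex.I) * m‖ := by
  have hinv : Complex.exp (-(2 * θ) * Complex.I) = (Complex.exp (2 * θ * Complex.I))⁻¹ := by
    rw [← Complex.exp_neg]; ring_nf
  have hnorm : ‖Complex.exp (2 * θ * Complex.I)‖ = 1 := by
    simpa [mul_assoc] using Complex.norm_exp_ofReal_mul_I (2 * θ)
  have hne : Complex.exp (2 * θ * Complex.I) ≠ 0 := Complex.exp_ne_zero _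
  rw [hinv, ← one_mul ‖1 + _‖, ← hnorm, ← norm_mul, mul_add, mul_one, mul_inv_cancel_left₀ hne]

lemma norm_exp_neg_two_mul_I_mul (θ : ℝ) (m : ℂ) :
    ‖Complex.exp (-(2 * θ) * Complex.I) * m‖ = ‖m‖ := by
  rw [norm_mul, ← Complex.ofReal_ofNat, ← Complex.ofReal_mul, ← Complex.ofReal_neg,
    Complex.norm_exp_ofReal_mul_I, one_mul]

theorem stmt_1_general (μ : ℝ → ℂ) (p : ℝ → ℝ)
    (hμ_bd : ∃ M : ℝ, M < 1 ∧ ∀ᵐ θ : ℝ ∂volume, ‖μ θ‖ ≤ M)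
    (hp_int : 0 < ∫ θ in Set.Ioc (0:ℝ) (2*π), p θ)
    (a₀ : ℝ → ℝ)
    (ha₀ : ∀ θ, a₀ θ =
      ‖Complex.exp (2*θ*Complex.I) - μ θ‖^2 / (1 - (‖μ θ‖)^2))
    (a₁ : ℝ → ℝ)
    (ha₁ : ∀ θ, a₁ θ =
      ‖Complex.exp (2*θ*Complex.I) + μ θ‖^2 / (1 - (‖μ θ‖)^2))
    (heq : ((1/(2*π)) * ∫ θ in Set.Ioc (0:ℝ) (2*π), a₀ θ) *
      (((1/(2*π)) * ∫ θ in Set.Ioc (0:ℝ) (2*π), a₁ θ * (p θ)^2) /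
        ((1/(2*π)) * ∫ θ in Set.Ioc (0:ℝ) (2*π), p θ)^2) = 1) :
    (∀ᵐ θ : ℝ ∂(volume.restrict (Set.Ioc (0:ℝ) (2*π))),
      (Complex.exp (-(2*θ)*Complex.I) * μ θ).im = 0 ∧
      (Complex.exp (-(2*θ)*Complex.I) * μ θ).re ∈ Set.Ioo (-1:ℝ) 1) ∧
    ∃ c : ℝ, 0 < c ∧
      ∀ᵐ θ ∂(volume.restrict (Set.Ioc (0:ℝ) (2*π))), p θ = c * a₀ θ := by
  obtain ⟨M, hM, hμM⟩ := hμ_bd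
  set w : ℝ → ℂ := fun θ => Complex.exp (-(2 * θ) * Complex.I) * μ θ
  have hw : ∀ᵐ θ ∂(volume.restrict (Set.Ioc (0:ℝ) (2*π))), ‖w θ‖ < 1 :=
    ae_restrict_of_ae <| hμM.mono fun θ h => by
      simpa only [w, norm_exp_neg_two_mul_I_mul] using h.trans_lt hM
  have ha₀w (θ : ℝ) : a₀ θ = beltramiWeight (w θ) := by
    rw [ha₀, beltramiWeight, sub_eq_add_neg, norm_exp_two_mul_I_add, mul_neg, ← sub_eq_add_neg,
      norm_exp_neg_two_mul_I_mul]
  have ha₁w (θ : ℝ) : a₁ θ = beltramiWeight (-w θ) := by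
    rw [ha₁, beltramiWeight, norm_exp_two_mul_I_add, norm_neg, sub_neg_eq_add,
      norm_exp_neg_two_mul_I_mul]
  have heq' : (∫ θ in Set.Ioc (0:ℝ) (2*π), a₀ θ) * (∫ θ in Set.Ioc (0:ℝ) (2*π), a₁ θ * p θ ^ 2) =
      (∫ θ in Set.Ioc (0:ℝ) (2*π), p θ) ^ 2 := by
    have := Real.pi_pos
    field_simp at heq
    linear_combination heq
  obtain ⟨hprod, hp⟩ := ae_mul_eq_one_and_ae_eq_of_integral_mul_integral_eq_sq
    (hw.mono fun θ h => (ha₀w θ).symm ▸ beltramiWeight_pos h)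
    (hw.mono fun θ h => (ha₀w θ).symm ▸ (ha₁w θ).symm ▸ one_le_beltramiWeight_mul_neg h)
    hp_int.ne' heq'
  have hI₀ : 0 < ∫ θ in Set.Ioc (0:ℝ) (2*π), a₀ θ :=
    (integral_nonneg_of_ae (hw.mono fun θ h => (ha₀w θ ▸ beltramiWeight_pos h).le)).lt_of_ne'
      (left_ne_zero_of_mul (heq' ▸ pow_ne_zero 2 hp_int.ne'))
  refine ⟨?_, _, div_pos hp_int hI₀, hp⟩
  filter_upwards [hprod, hw] with θ hθ hwθ
  rw [ha₀w, ha₁w] at hθ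
  exact ⟨im_eq_zero_of_beltramiWeight_mul_neg_eq_one hwθ hθ,
    abs_lt.mp ((Complex.abs_re_le_norm _).trans_lt hwθ)⟩

/-- equality `g₀ · g₁ = 1` forces `e^{-2iθ} μ(θ)` to be real and in `(-1,1)`
almost everywhere, and forces `p = c · a₀` a.e. for some constant `c > 0`. -/
theorem stmt_1 (μ : ℝ → ℂ) (p : ℝ → ℝ)
    (hμ_meas : Measurable μ)
    (hμ_per : ∀ θ : ℝ, μ (θ + 2 * π) = μ θ)
    (hμ_bd : ∃ M : ℝ, M < 1 ∧ ∀ᵐ θ : ℝ ∂volume, ‖μ θ‖ ≤ M)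
    (hp_meas : Measurable p)
    (hp_pos : ∀ᵐ θ ∂(volume.restrict (Set.Ioc (0:ℝ) (2*π))), 0 < p θ)
    (hp_L2 : IntegrableOn (fun θ => (p θ)^2) (Set.Ioc (0:ℝ) (2*π)))
    (hp_int : 0 < ∫ θ in Set.Ioc (0:ℝ) (2*π), p θ)
    (a₀ : ℝ → ℝ)
    (ha₀ : ∀ θ, a₀ θ =
      ‖Complex.exp (2*θ*Complex.I) - μ θ‖^2 / (1 - (‖μ θ‖)^2))
    (a₁ : ℝ → ℝ)
    (ha₁ : ∀ θ, a₁ θ =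
      ‖Complex.exp (2*θ*Complex.I) + μ θ‖^2 / (1 - (‖μ θ‖)^2))
    (heq : ((1/(2*π)) * ∫ θ in Set.Ioc (0:ℝ) (2*π), a₀ θ) *
      (((1/(2*π)) * ∫ θ in Set.Ioc (0:ℝ) (2*π), a₁ θ * (p θ)^2) /
        ((1/(2*π)) * ∫ θ in Set.Ioc (0:ℝ) (2*π), p θ)^2) = 1) :
    (∀ᵐ θ : ℝ ∂(volume.restrict (Set.Ioc (0:ℝ) (2*π))),
      (Complex.exp (-(2*θ)*Complex.I) * μ θ).im = 0 ∧
      (Complex.exp (-(2*θ)*Complex.I) * μ θ).re ∈ Set.Ioo (-1:ℝ) 1) ∧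
    ∃ c : ℝ, 0 < c ∧
      ∀ᵐ θ ∂(volume.restrict (Set.Ioc (0:ℝ) (2*π))), p θ = c * a₀ θ :=
  stmt_1_general μ p hμ_bd hp_int a₀ ha₀ a₁ ha₁ heq
end

section
/- Let μ : ℝ → ℂ be measurable and 2π-periodic with ess sup |μ| < 1, and suppose that for almost every θ the number e^{−2iθ}μ(θ) is real with e^{−2iθ}μ(θ) ∈ (−1,1). Define a₀(θ) = |e^{2iθ} − μ(θ)|²/(1 − |μ(θ)|²) and a₁(θ) = |e^{2iθ} + μ(θ)|²/(1 − |μ(θ)|²), and let p(θ) = c · a₀(θ) for some constant c > 0, assuming p ∈ L²[0,2π]. Then with g₀ = (1/2π)∫₀^{2π} a₀ dθ and g₁ = [(1/2π)∫₀^{2π} a₁ p² dθ] / [(1/2π)∫₀^{2π} p dθ]², one has g₀ · g₁ = 1. -/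
open MeasureTheory
open scoped Real

/-!
When `e^{-2iθ} μ(θ) = x` is real with `|x| < 1`, both weights are explicit Möbius expressions in
`x`: `a₀ = (1 - x)/(1 + x)` and `a₁ = (1 + x)/(1 - x)`. Hence `a₀ a₁ = 1` and `a₀ > 0` almost
everywhere, so `∫ a₁ p² = c² ∫ a₀` and `∫ p = c ∫ a₀`, and `g₀ g₁ = 1` as soon as `∫ a₀ ≠ 0`.
That integral is positive because `a₀ = p / c` lies in `L² ⊆ L¹` on `(0, 2π]` and is a.e. positive.
-/

theorem setIntegral_pos_of_ae_pos {X : Type*} [MeasurableSpace X] {μ : Measure X} {s : Set X}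
    {f : X → ℝ} (hf : ∀ᵐ x ∂μ.restrict s, 0 < f x) (hfi : IntegrableOn f s μ) (hs : μ s ≠ 0) :
    0 < ∫ x in s, f x ∂μ := by
  rw [integral_pos_iff_support_of_nonneg_ae (hf.mono fun _ hx => hx.le) hfi, pos_iff_ne_zero]
  intro h0
  have hfalse : ∀ᵐ x ∂μ.restrict s, False :=
    (hf.and (measure_eq_zero_iff_ae_notMem.1 h0)).mono fun _ hx => hx.2 hx.1.ne'
  rw [Filter.eventually_false_iff_eq_bot, ae_eq_bot, Measure.restrict_eq_zero] at hfalse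
  exact hs hfalse

theorem integrable_of_integrable_sq {X : Type*} [MeasurableSpace X] {μ : Measure X}
    [IsFiniteMeasure μ] {f : X → ℝ} (hf : AEStronglyMeasurable f μ)
    (hf2 : Integrable (fun x => f x ^ 2) μ) : Integrable f μ :=
  ((memLp_two_iff_integrable_sq hf).2 hf2).integrable one_le_two

theorem integral_mul_const_mul_sq_of_mul_eq_one {X : Type*} [MeasurableSpace X] {μ : Measure X}
    {f g : X → ℝ} (hfg : ∀ᵐ x ∂μ, f x * g x = 1) (c : ℝ) :
    ∫ x, g x * (c * f x) ^ 2 ∂μ = c ^ 2 * ∫ x, f x ∂μ := by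
  rw [← integral_const_mul]
  refine integral_congr_ae (hfg.mono fun x hx => ?_)
  linear_combination (c ^ 2 * f x) * hx

theorem norm_sub_sq_div_one_sub_norm_sq {u m : ℂ} (hu : ‖u‖ = 1) {x : ℝ} (hm : m = u * x)
    (hx : |x| < 1) : ‖u - m‖ ^ 2 / (1 - ‖m‖ ^ 2) = (1 - x) / (1 + x) := by
  have hsub : ‖u - m‖ = |1 - x| := by
    rw [hm, show u - u * x = u * ((1 - x : ℝ) : ℂ) by push_cast; ring, norm_mul, hu, one_mul,
      Complex.norm_real, Real.norm_eq_abs]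
  have hnorm : ‖m‖ = |x| := by rw [hm, norm_mul, hu, one_mul, Complex.norm_real, Real.norm_eq_abs]
  obtain ⟨hx₁, hx₂⟩ := abs_lt.1 hx
  have h₁ : 1 + x ≠ 0 := by linarith
  have h₂ : 1 - x ≠ 0 := by linarith
  rw [hsub, hnorm, sq_abs, sq_abs, show (1 : ℝ) - x ^ 2 = (1 - x) * (1 + x) by ring]
  field_simp

theorem eq_exp_mul_re_of_im_eq_zero {θ : ℝ} {m : ℂ}
    (h : (Complex.exp (-(2 * θ) * Complex.I) * m).im = 0) :
    m = Complex.exp (2 * θ * Complex.I) * ((Complex.exp (-(2 * θ) * Complex.I) * m).re : ℂ) := by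
  have hre : ((Complex.exp (-(2 * θ) * Complex.I) * m).re : ℂ) =
      Complex.exp (-(2 * θ) * Complex.I) * m := Complex.ext (by simp) (by rw [Complex.ofReal_im, h])
  rw [hre, ← mul_assoc, ← Complex.exp_add]
  simp

theorem weights_mul_eq_one_and_pos {θ : ℝ} {m : ℂ}
    (him : (Complex.exp (-(2 * θ) * Complex.I) * m).im = 0)
    (hre : (Complex.exp (-(2 * θ) * Complex.I) * m).re ∈ Set.Ioo (-1 : ℝ) 1) :
    ‖Complex.exp (2 * θ * Complex.I) - m‖ ^ 2 / (1 - ‖m‖ ^ 2) *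
        (‖Complex.exp (2 * θ * Complex.I) + m‖ ^ 2 / (1 - ‖m‖ ^ 2)) = 1 ∧
      0 < ‖Complex.exp (2 * θ * Complex.I) - m‖ ^ 2 / (1 - ‖m‖ ^ 2) := by
  set x := (Complex.exp (-(2 * θ) * Complex.I) * m).re
  have hu : ‖Complex.exp (2 * θ * Complex.I)‖ = 1 := by
    simpa using Complex.norm_exp_ofReal_mul_I (2 * θ)
  have hm : m = Complex.exp (2 * θ * Complex.I) * x := eq_exp_mul_re_of_im_eq_zero him
  have hx : |x| < 1 := abs_lt.2 hre
  have ha₀ := norm_sub_sq_div_one_sub_norm_sq hu hm hx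
  -- the `+` weight of `m` is the `-` weight of `-m = e^{2iθ} (-x)`
  have ha₁ := norm_sub_sq_div_one_sub_norm_sq hu (m := -m) (x := -x) (by rw [hm]; push_cast; ring)
    (by rwa [abs_neg])
  rw [sub_neg_eq_add, norm_neg] at ha₁
  obtain ⟨hx₁, hx₂⟩ := Set.mem_Ioo.1 hre
  have h₁ : 0 < 1 + x := by linarith
  have h₂ : 0 < 1 - x := by linarith
  rw [ha₀, ha₁, sub_neg_eq_add, ← sub_eq_add_neg]
  exact ⟨by field_simp, div_pos h₂ h₁⟩

theorem stmt_2_general (μ : ℝ → ℂ) (p : ℝ → ℝ)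
    (hμ_meas : Measurable μ)
    (hμ_real : ∀ᵐ θ : ℝ ∂volume,
      (Complex.exp (-(2*θ)*Complex.I) * μ θ).im = 0 ∧
      (Complex.exp (-(2*θ)*Complex.I) * μ θ).re ∈ Set.Ioo (-1:ℝ) 1)
    (a₀ : ℝ → ℝ)
    (ha₀ : ∀ θ, a₀ θ =
      ‖Complex.exp (2*θ*Complex.I) - μ θ‖^2 / (1 - (‖μ θ‖)^2))
    (a₁ : ℝ → ℝ)
    (ha₁ : ∀ θ, a₁ θ =
      ‖Complex.exp (2*θ*Complex.I) + μ θ‖^2 / (1 - (‖μ θ‖)^2))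
    (c : ℝ) (hc : 0 < c)
    (hp : ∀ θ, p θ = c * a₀ θ)
    (hp_L2 : IntegrableOn (fun θ => (p θ)^2) (Set.Ioc (0:ℝ) (2*π))) :
    ((1/(2*π)) * ∫ θ in Set.Ioc (0:ℝ) (2*π), a₀ θ) *
      (((1/(2*π)) * ∫ θ in Set.Ioc (0:ℝ) (2*π), a₁ θ * (p θ)^2) /
        ((1/(2*π)) * ∫ θ in Set.Ioc (0:ℝ) (2*π), p θ)^2) = 1 := by
  have hpoint : ∀ᵐ θ ∂volume.restrict (Set.Ioc 0 (2 * π)), a₀ θ * a₁ θ = 1 ∧ 0 < a₀ θ :=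
    ae_restrict_of_ae <| hμ_real.mono fun θ hθ => by
      rw [ha₀, ha₁]; exact weights_mul_eq_one_and_pos hθ.1 hθ.2
  have hp_meas : Measurable p := by rw [funext hp, funext ha₀]; fun_prop
  have hp_int : IntegrableOn p (Set.Ioc 0 (2 * π)) :=
    integrable_of_integrable_sq hp_meas.aestronglyMeasurable hp_L2
  have hI : 0 < ∫ θ in Set.Ioc 0 (2 * π), a₀ θ := by
    refine setIntegral_pos_of_ae_pos (hpoint.mono fun _ h => h.2) ?_ (by simp [Real.pi_pos])
    exact (hp_int.const_mul c⁻¹).congr (ae_of_all _ fun θ => by simp [hp, hc.ne'])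
  simp_rw [hp]
  rw [integral_mul_const_mul_sq_of_mul_eq_one (hpoint.mono fun _ h => h.1), integral_const_mul]
  field_simp [hI.ne', hc.ne', Real.pi_pos.ne']

/-- conversely, if `e^{-2iθ} μ(θ)` is a.e. real and in `(-1,1)` and `p = c · a₀`
for a constant `c > 0` (with `p ∈ L²[0,2π]`), then `g₀ · g₁ = 1`. -/
theorem stmt_2 (μ : ℝ → ℂ) (p : ℝ → ℝ)
    (hμ_meas : Measurable μ)
    (hμ_per : ∀ θ : ℝ, μ (θ + 2 * π) = μ θ)
    (hμ_bd : ∃ M : ℝ, M < 1 ∧ ∀ᵐ θ : ℝ ∂volume, ‖μ θ‖ ≤ M)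
    (hμ_real : ∀ᵐ θ : ℝ ∂volume,
      (Complex.exp (-(2*θ)*Complex.I) * μ θ).im = 0 ∧
      (Complex.exp (-(2*θ)*Complex.I) * μ θ).re ∈ Set.Ioo (-1:ℝ) 1)
    (a₀ : ℝ → ℝ)
    (ha₀ : ∀ θ, a₀ θ =
      ‖Complex.exp (2*θ*Complex.I) - μ θ‖^2 / (1 - (‖μ θ‖)^2))
    (a₁ : ℝ → ℝ)
    (ha₁ : ∀ θ, a₁ θ =
      ‖Complex.exp (2*θ*Complex.I) + μ θ‖^2 / (1 - (‖μ θ‖)^2))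
    (c : ℝ) (hc : 0 < c)
    (hp : ∀ θ, p θ = c * a₀ θ)
    (hp_L2 : IntegrableOn (fun θ => (p θ)^2) (Set.Ioc (0:ℝ) (2*π))) :
    ((1/(2*π)) * ∫ θ in Set.Ioc (0:ℝ) (2*π), a₀ θ) *
      (((1/(2*π)) * ∫ θ in Set.Ioc (0:ℝ) (2*π), a₁ θ * (p θ)^2) /
        ((1/(2*π)) * ∫ θ in Set.Ioc (0:ℝ) (2*π), p θ)^2) = 1 :=
  stmt_2_general μ p hμ_meas hμ_real a₀ ha₀ a₁ ha₁ c hc hp hp_L2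
end

section
/- Let f : 𝔻 → Ω be a C¹ diffeomorphism between open subsets of ℂ ≅ ℝ² with positive Jacobian determinant J(f) = |∂f|² − |∂̄f|² > 0, where ∂f = (f_x − i f_y)/2 and ∂̄f = (f_x + i f_y)/2 are the Wirtinger derivatives, and let μ = ∂̄f/∂f be the complex dilatation. Let h : 𝔻 → ℝ be C¹. Then, as an identity of integrals in [0,∞], ∫_Ω |∇(h ∘ f⁻¹)|² dA = ∫_𝔻 { a₀ h_r² + a₁ (h_θ²/r²) + a₂ h_r (h_θ/r) } r dr dθ, where in polar coordinates (r,θ) on 𝔻 the coefficients are a₀ = |e^{2iθ} − μ|²/(1 − |μ|²), a₁ = |e^{2iθ} + μ|²/(1 − |μ|²), and a₂ = 2 Im( conj(e^{2iθ} + μ)(e^{2iθ} − μ) )/(1 − |μ|²), evaluated at the point re^{iθ}, and h_r, h_θ denote the polar partial derivatives of h. -/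
/-!
Change variables `w = f z`: the left side becomes `∫_𝔻 J(f) |∇(h ∘ g)(f z)|²`. Writing gradients
as complex numbers, the chain rule `Dh = D(h ∘ g) ∘ Df` reads `ℓ = conj(∂f) m + ∂̄f conj(m)` for
`ℓ = ∇h(z)`, `m = ∇(h ∘ g)(f z)`, which inverts to `J(f) m = ℓ ∂f - conj(ℓ) ∂̄f`; hence
`J(f) |m|² = |ℓ - conj(ℓ) μ|² / (1 - |μ|²)`. With `u = z/|z|` and `ζ = conj(u) ℓ = h_r + i h_θ/r`
one has `|ℓ - conj(ℓ) μ| = |u² ζ - conj(ζ) μ|`, and expanding this square gives the quadratic form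
with coefficients `a₀, a₁, a₂`.
-/

open MeasureTheory

/-- The Wirtinger derivative `∂f = (f_x - i f_y)/2` of `f : ℂ → ℂ` viewed as a real map. -/
noncomputable def wirtingerD (f : ℂ → ℂ) (z : ℂ) : ℂ :=
  (fderiv ℝ f z 1 - Complex.I * fderiv ℝ f z Complex.I) / 2

/-- The Wirtinger derivative `∂̄f = (f_x + i f_y)/2` of `f : ℂ → ℂ` viewed as a real map. -/
noncomputable def wirtingerDBar (f : ℂ → ℂ) (z : ℂ) : ℂ :=
  (fderiv ℝ f z 1 + Complex.I * fderiv ℝ f z Complex.I) / 2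

open ComplexConjugate InnerProductSpace

theorem fderiv_apply_eq_wirtinger (f : ℂ → ℂ) (z w : ℂ) :
    fderiv ℝ f z w = wirtingerD f z * w + wirtingerDBar f z * conj w := by
  have hw : w = w.re • (1 : ℂ) + w.im • Complex.I := by simp [Complex.real_smul]
  conv_lhs => rw [hw, map_add, map_smul, map_smul]
  conv_rhs => rw [← Complex.re_add_im w]
  simp only [wirtingerD, wirtingerDBar, Complex.real_smul, map_add, map_mul, Complex.conj_ofReal,
    Complex.conj_I]
  linear_combination (w.im * fderiv ℝ f z Complex.I) * Complex.I_sq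

theorem det_fderiv_eq_wirtinger (f : ℂ → ℂ) (z : ℂ) :
    (fderiv ℝ f z).det = ‖wirtingerD f z‖ ^ 2 - ‖wirtingerDBar f z‖ ^ 2 := by
  rw [ContinuousLinearMap.det, ← LinearMap.det_toMatrix Complex.basisOneI, Matrix.det_fin_two]
  simp only [LinearMap.toMatrix_apply, Complex.coe_basisOneI, Complex.coe_basisOneI_repr,
    ContinuousLinearMap.coe_coe, wirtingerD, wirtingerDBar, Complex.sq_norm, Complex.normSq_apply,
    Matrix.cons_val_zero, Matrix.cons_val_one, Complex.div_ofNat_re, Complex.div_ofNat_im,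
    Complex.sub_re, Complex.sub_im, Complex.add_re, Complex.add_im, Complex.mul_re, Complex.mul_im,
    Complex.I_re, Complex.I_im]
  ring

theorem toDual_symm_comp_fderiv (f : ℂ → ℂ) (z : ℂ) (M : StrongDual ℝ ℂ) :
    (toDual ℝ ℂ).symm (M.comp (fderiv ℝ f z)) =
      conj (wirtingerD f z) * (toDual ℝ ℂ).symm M
        + wirtingerDBar f z * conj ((toDual ℝ ℂ).symm M) := by
  refine ext_inner_right ℝ fun w => ?_
  rw [toDual_symm_apply, M.comp_apply, ← toDual_symm_apply, fderiv_apply_eq_wirtinger]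
  simp only [Complex.inner, map_add, map_mul, Complex.conj_conj, Complex.mul_re, Complex.mul_im,
    Complex.add_re, Complex.add_im, Complex.conj_re, Complex.conj_im]
  ring

theorem norm_sub_conj_mul_sq_div_eq {d e m ℓ : ℂ} (hJ : 0 < ‖d‖ ^ 2 - ‖e‖ ^ 2)
    (hℓ : ℓ = conj d * m + e * conj m) :
    ‖ℓ - conj ℓ * (e / d)‖ ^ 2 / (1 - ‖e / d‖ ^ 2) = (‖d‖ ^ 2 - ‖e‖ ^ 2) * ‖m‖ ^ 2 := by
  have hd : d ≠ 0 := norm_pos_iff.mp (by nlinarith [norm_nonneg d, sq_nonneg ‖e‖])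
  have hsolve : ℓ * d - conj ℓ * e = ((‖d‖ ^ 2 - ‖e‖ ^ 2 : ℝ) : ℂ) * m := by
    have hconj : conj ℓ = d * conj m + conj e * m := by simp [hℓ, mul_comm]
    rw [hconj, hℓ]
    push_cast
    rw [← Complex.mul_conj', ← Complex.mul_conj']
    ring
  have hlhs : ℓ - conj ℓ * (e / d) = (ℓ * d - conj ℓ * e) / d := by field_simp
  rw [hlhs, hsolve, norm_div, norm_mul, Complex.norm_real, Real.norm_eq_abs, abs_of_pos hJ,
    norm_div]
  field_simp

theorem norm_mul_sub_conj_mul_sq (E μ ζ : ℂ) :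
    ‖E * ζ - conj ζ * μ‖ ^ 2 = ‖E - μ‖ ^ 2 * ζ.re ^ 2 + ‖E + μ‖ ^ 2 * ζ.im ^ 2
      + 2 * (conj (E + μ) * (E - μ)).im * ζ.re * ζ.im := by
  simp only [Complex.sq_norm, Complex.normSq_apply, Complex.mul_re, Complex.mul_im,
    Complex.sub_re, Complex.sub_im, Complex.add_re, Complex.add_im, Complex.conj_re,
    Complex.conj_im]
  ring

theorem norm_sub_conj_mul_sq_eq_polar (ℓ μ u : ℂ) (hu : ‖u‖ = 1) :
    ‖ℓ - conj ℓ * μ‖ ^ 2 = ‖u ^ 2 - μ‖ ^ 2 * inner ℝ ℓ u ^ 2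
      + ‖u ^ 2 + μ‖ ^ 2 * inner ℝ ℓ (Complex.I * u) ^ 2
      + 2 * (conj (u ^ 2 + μ) * (u ^ 2 - μ)).im * inner ℝ ℓ u * inner ℝ ℓ (Complex.I * u) := by
  have hu1 : conj u * u = 1 := by
    rw [mul_comm, Complex.mul_conj', hu]
    simp
  have hx : inner ℝ ℓ u = (conj u * ℓ).re := by simp [Complex.inner]
  have hy : inner ℝ ℓ (Complex.I * u) = (conj u * ℓ).im := by
    simp only [Complex.inner, Complex.mul_re, Complex.mul_im, Complex.I_re, Complex.I_im,
      Complex.conj_re, Complex.conj_im]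
    ring
  have hsplit : ℓ - conj ℓ * μ = conj u * (u ^ 2 * (conj u * ℓ) - conj (conj u * ℓ) * μ) := by
    simp only [map_mul, Complex.conj_conj]
    linear_combination (conj ℓ * μ - ℓ * (1 + conj u * u)) * hu1
  rw [hsplit, norm_mul, Complex.norm_conj, hu, one_mul, norm_mul_sub_conj_mul_sq, hx, hy]

noncomputable def polarDirichletDensity (μ : ℂ) (L : StrongDual ℝ ℂ) (z : ℂ) : ℝ :=
  let E : ℂ := z ^ 2 / (‖z‖ : ℂ) ^ 2
  let a₀ : ℝ := (‖E - μ‖) ^ 2 / (1 - (‖μ‖) ^ 2)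
  let a₁ : ℝ := (‖E + μ‖) ^ 2 / (1 - (‖μ‖) ^ 2)
  let a₂ : ℝ := 2 * ((starRingEnd ℂ) (E + μ) * (E - μ)).im / (1 - (‖μ‖) ^ 2)
  let hr : ℝ := L (z / (‖z‖ : ℂ))
  let hθr : ℝ := L (Complex.I * z / (‖z‖ : ℂ))
  a₀ * hr ^ 2 + a₁ * hθr ^ 2 + a₂ * hr * hθr

theorem abs_det_fderiv_mul_norm_sq_eq_polarDirichletDensity (f : ℂ → ℂ) {z : ℂ} (hz : z ≠ 0)
    (hJ : 0 < ‖wirtingerD f z‖ ^ 2 - ‖wirtingerDBar f z‖ ^ 2) (M : StrongDual ℝ ℂ) :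
    |(fderiv ℝ f z).det| * ‖M‖ ^ 2 =
      polarDirichletDensity (wirtingerDBar f z / wirtingerD f z) (M.comp (fderiv ℝ f z)) z := by
  set ℓ := (toDual ℝ ℂ).symm (M.comp (fderiv ℝ f z))
  have hu : ‖z / (‖z‖ : ℂ)‖ = 1 := by simp [hz]
  have hpolar := norm_sub_conj_mul_sq_eq_polar ℓ (wirtingerDBar f z / wirtingerD f z) _ hu
  rw [div_pow, toDual_symm_apply, ← mul_div_assoc Complex.I, toDual_symm_apply] at hpolar
  rw [det_fderiv_eq_wirtinger, abs_of_pos hJ, ← ((toDual ℝ ℂ).symm).norm_map M,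
    ← norm_sub_conj_mul_sq_div_eq hJ (toDual_symm_comp_fderiv f z M), hpolar]
  simp only [polarDirichletDensity]
  ring

theorem fderiv_comp_inverse_comp_fderiv {𝕜 E F G : Type*} [NontriviallyNormedField 𝕜]
    [NormedAddCommGroup E] [NormedSpace 𝕜 E] [NormedAddCommGroup F] [NormedSpace 𝕜 F]
    [NormedAddCommGroup G] [NormedSpace 𝕜 G]
    {f : E → F} {g : F → E} {h : E → G} {x : E} (hgf : ∀ᶠ y in nhds x, g (f y) = y)
    (hh : DifferentiableAt 𝕜 h x) (hg : DifferentiableAt 𝕜 g (f x))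
    (hf : DifferentiableAt 𝕜 f x) :
    (fderiv 𝕜 (fun w => h (g w)) (f x)).comp (fderiv 𝕜 f x) = fderiv 𝕜 h x := by
  have hx : g (f x) = x := hgf.self_of_nhds
  have hhg : DifferentiableAt 𝕜 (fun w => h (g w)) (f x) := (hx ▸ hh).comp (f x) hg
  have hhgf : (fun w => h (g w)) ∘ f =ᶠ[nhds x] h :=
    hgf.mono fun y hy => by simp only [Function.comp_apply, hy]
  rw [← fderiv_comp x hhg hf, hhgf.fderiv_eq]

/-- transformation of the Dirichlet integral of `h ∘ f⁻¹` under a C¹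
diffeomorphism `f : 𝔻 → Ω` with positive Jacobian `J(f) = |∂f|² - |∂̄f|²`, expressed in polar
form on `𝔻` (the factor `r dr dθ` is two-dimensional Lebesgue measure), as an identity in
`[0,∞]`.  Here `g = f⁻¹`, `μ = ∂̄f/∂f` is the complex dilatation, `e^{2iθ} = z²/|z|²`,
`h_r = ∂h/∂r` and `h_θ/r` are the polar derivatives of `h` at `z`. -/
theorem stmt_3 (𝔻 Ω : Set ℂ) (h𝔻 : IsOpen 𝔻) (hΩ : IsOpen Ω)
    (f g : ℂ → ℂ)
    (hf : ContDiffOn ℝ 1 f 𝔻) (hg : ContDiffOn ℝ 1 g Ω)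
    (hf_maps : Set.MapsTo f 𝔻 Ω) (hg_maps : Set.MapsTo g Ω 𝔻)
    (hgf : ∀ z ∈ 𝔻, g (f z) = z) (hfg : ∀ w ∈ Ω, f (g w) = w)
    (hJ : ∀ z ∈ 𝔻,
      0 < (‖wirtingerD f z‖)^2 - (‖wirtingerDBar f z‖)^2)
    (h : ℂ → ℝ) (hh : ContDiffOn ℝ 1 h 𝔻) :
    ∫⁻ w in Ω, ENNReal.ofReal (‖fderiv ℝ (fun w => h (g w)) w‖^2) =
      ∫⁻ z in 𝔻, ENNReal.ofReal (
        let μ : ℂ := wirtingerDBar f z / wirtingerD f z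
        let E : ℂ := z^2 / (‖z‖ : ℂ)^2
        let a₀ : ℝ := (‖E - μ‖)^2 / (1 - (‖μ‖)^2)
        let a₁ : ℝ := (‖E + μ‖)^2 / (1 - (‖μ‖)^2)
        let a₂ : ℝ := 2 * ((starRingEnd ℂ) (E + μ) * (E - μ)).im / (1 - (‖μ‖)^2)
        let hr : ℝ := fderiv ℝ h z (z / (‖z‖ : ℂ))
        let hθr : ℝ := fderiv ℝ h z (Complex.I * z / (‖z‖ : ℂ))
        a₀ * hr^2 + a₁ * hθr^2 + a₂ * hr * hθr) := by
  have hf' : ∀ z ∈ 𝔻, DifferentiableAt ℝ f z := fun z hz =>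
    (hf.differentiableOn one_ne_zero).differentiableAt (h𝔻.mem_nhds hz)
  have hbij : Set.BijOn f 𝔻 Ω := Set.InvOn.bijOn ⟨hgf, hfg⟩ hf_maps hg_maps
  rw [← hbij.image_eq, lintegral_image_eq_lintegral_abs_det_fderiv_mul volume h𝔻.measurableSet
    (fun z hz => (hf' z hz).hasFDerivAt.hasFDerivWithinAt) hbij.injOn]
  refine lintegral_congr_ae ?_
  -- the polar frame `z / ‖z‖` is junk at `z = 0`, but `{0}` is null
  filter_upwards [ae_restrict_mem h𝔻.measurableSet, ae_restrict_of_ae (volume.ae_ne 0)]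
    with z hz hz0
  have hchain := fderiv_comp_inverse_comp_fderiv
    (Filter.eventually_of_mem (h𝔻.mem_nhds hz) hgf)
    ((hh.differentiableOn one_ne_zero).differentiableAt (h𝔻.mem_nhds hz))
    ((hg.differentiableOn one_ne_zero).differentiableAt (hΩ.mem_nhds (hf_maps hz))) (hf' z hz)
  rw [← ENNReal.ofReal_mul (abs_nonneg _),
    abs_det_fderiv_mul_norm_sq_eq_polarDirichletDensity f hz0 (hJ z hz), hchain]
  rfl
end

section
/- Let f : U → ℂ (U ⊂ ℂ open) be differentiable at the point z = re^{iθ} with r > 0, viewed as a map ℝ² → ℝ², and suppose its Jacobian determinant J(f)(z) = det Df(z) is nonzero. Let h : U → ℝ be differentiable at z. Then |(∇h)(z) · (Df(z))⁻¹|² = | −f_r(z) (h_θ(z)/r) + (f_θ(z)/r) h_r(z) |² / J(f)(z)², where f_r = cos θ f_x + sin θ f_y and f_θ = r(−sin θ f_x + cos θ f_y) are the polar partial derivatives of the complex-valued function f (and similarly h_r, h_θ for h), ∇h = (h_x, h_y) is a row vector, and | · | on the right denotes the complex modulus. -/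
/-!
With `L = Dh ∘ Df⁻¹` we have `Dh = L ∘ Df`, and expanding in the basis `(1, I)` turns the
numerator `-Df 1 · Dh I + Df I · Dh 1` into `J · I · (L 1 + L I · I)`; by the Riesz
representation the modulus of `L 1 + L I · I` is `‖L‖`. The polar frame `(u, I u)` is the image
of `(1, I)` under multiplication by `u`, and the numerator, being alternating in the frame, gets
multiplied by the determinant `|u|² = 1`.
-/

open Complex

namespace Complex

theorem apply_eq_re_smul_add_im_smul {E F : Type*} [AddCommGroup E] [Module ℝ E]
    [FunLike F ℂ E] [LinearMapClass F ℝ ℂ E] (L : F) (w : ℂ) :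
    L w = w.re • L 1 + w.im • L I := by
  conv_lhs => rw [show w = w.re • (1 : ℂ) + w.im • I by simp, map_add, map_smul, map_smul]

theorem polar_cross_eq_normSq_mul {F G : Type*} [FunLike F ℂ ℂ] [LinearMapClass F ℝ ℂ ℂ]
    [FunLike G ℂ ℝ] [LinearMapClass G ℝ ℂ ℝ] (A : F) (B : G) (u : ℂ) :
    -A u * (B (I * u) : ℂ) + A (I * u) * B u = normSq u * (-A 1 * (B I : ℂ) + A I * B 1) := by
  rw [apply_eq_re_smul_add_im_smul A u, apply_eq_re_smul_add_im_smul A (I * u),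
    apply_eq_re_smul_add_im_smul B u, apply_eq_re_smul_add_im_smul B (I * u)]
  simp only [mul_re, mul_im, I_re, I_im, normSq_apply, real_smul, smul_eq_mul]
  push_cast
  ring

theorem det_real_linearMap (T : ℂ →ₗ[ℝ] ℂ) :
    LinearMap.det T = (T 1).re * (T I).im - (T 1).im * (T I).re := by
  rw [← LinearMap.det_toMatrix basisOneI, Matrix.det_fin_two]
  simp [LinearMap.toMatrix_apply]
  ring

theorem polar_cross_comp (T : ℂ →ₗ[ℝ] ℂ) (L : ℂ →ₗ[ℝ] ℝ) :
    -T 1 * (L (T I) : ℂ) + T I * L (T 1) = LinearMap.det T * I * (L 1 + L I * I) := by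
  rw [det_real_linearMap, apply_eq_re_smul_add_im_smul L (T 1),
    apply_eq_re_smul_add_im_smul L (T I)]
  apply Complex.ext <;> simp <;> ring

theorem norm_real_dual (L : ℂ →L[ℝ] ℝ) : ‖L‖ = ‖(L 1 : ℂ) + L I * I‖ := by
  obtain ⟨w, rfl⟩ := (InnerProductSpace.toDual ℝ ℂ).surjective L
  simp [Complex.inner]

end Complex

theorem stmt_4_general (z : ℂ) (hz : z ≠ 0)
    (Df : ℂ ≃L[ℝ] ℂ)
    (Dh : ℂ →L[ℝ] ℝ)
    (J : ℝ) (hJ : J = LinearMap.det ((Df : ℂ →L[ℝ] ℂ) : ℂ →ₗ[ℝ] ℂ)) (hJne : J ≠ 0) :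
    ‖Dh.comp (Df.symm : ℂ →L[ℝ] ℂ)‖^2 =
      (‖(-(Df (z / ((‖z‖ : ℝ) : ℂ))) * (Dh (Complex.I * z / ((‖z‖ : ℝ) : ℂ)) : ℂ)
        + Df (Complex.I * z / ((‖z‖ : ℝ) : ℂ)) * (Dh (z / ((‖z‖ : ℝ) : ℂ)) : ℂ))‖)^2
      / J^2 := by
  set L := Dh.comp (Df.symm : ℂ →L[ℝ] ℂ)
  have hDh : ∀ x, Dh x = L (Df x) := fun x => by simp [L]
  have hu : normSq (z / ((‖z‖ : ℝ) : ℂ)) = 1 := by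
    rw [normSq_div, normSq_ofReal, normSq_eq_norm_sq, ← sq, div_self (by positivity)]
  have hcross := polar_cross_comp ((Df : ℂ →L[ℝ] ℂ) : ℂ →ₗ[ℝ] ℂ) L
  simp only [ContinuousLinearMap.coe_coe, ContinuousLinearEquiv.coe_coe, ← hDh, ← hJ] at hcross
  rw [mul_div_assoc, polar_cross_eq_normSq_mul, hu, ofReal_one, one_mul, hcross,
    norm_real_dual L, norm_mul, norm_mul, norm_I, norm_real, Real.norm_eq_abs, mul_one, mul_pow,
    sq_abs]
  field_simp

/-- pointwise chain-rule identity.  If `f : ℂ → ℂ` (as a real map) has invertible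
derivative `Df` at `z = re^{iθ} ≠ 0` with Jacobian determinant `J ≠ 0`, and `h : ℂ → ℝ` has
derivative `Dh` at `z`, then the squared Euclidean length of the row vector `(∇h)(Df)⁻¹`
equals `|−f_r (h_θ/r) + (f_θ/r) h_r|² / J²`, where `f_r = Df(z/|z|)`, `f_θ/r = Df(iz/|z|)`,
`h_r = Dh(z/|z|)`, `h_θ/r = Dh(iz/|z|)` are the polar partial derivatives. -/
theorem stmt_4 (f : ℂ → ℂ) (h : ℂ → ℝ) (z : ℂ) (hz : z ≠ 0)
    (Df : ℂ ≃L[ℝ] ℂ) (hf : HasFDerivAt f (Df : ℂ →L[ℝ] ℂ) z)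
    (Dh : ℂ →L[ℝ] ℝ) (hh : HasFDerivAt h Dh z)
    (J : ℝ) (hJ : J = LinearMap.det ((Df : ℂ →L[ℝ] ℂ) : ℂ →ₗ[ℝ] ℂ)) (hJne : J ≠ 0) :
    ‖Dh.comp (Df.symm : ℂ →L[ℝ] ℂ)‖^2 =
      (‖(-(Df (z / ((‖z‖ : ℝ) : ℂ))) * (Dh (Complex.I * z / ((‖z‖ : ℝ) : ℂ)) : ℂ)
        + Df (Complex.I * z / ((‖z‖ : ℝ) : ℂ)) * (Dh (z / ((‖z‖ : ℝ) : ℂ)) : ℂ))‖)^2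
      / J^2 :=
  stmt_4_general z hz Df Dh J hJ hJne
end

section
/- Let R : ℝ → (0,∞) be 2π-periodic and differentiable at θ, and define f(re^{iθ}) = R(θ) r e^{iθ} for r > 0. Then the Wirtinger derivatives of f at re^{iθ} are ∂̄f = e^{2iθ} i R′(θ)/2 and ∂f = (2R(θ) − iR′(θ))/2; consequently the complex dilatation μ = ∂̄f/∂f equals e^{2iθ} iR′(θ)/(2R(θ) − iR′(θ)) and satisfies |μ| < 1; and the associated coefficients are a₀ := |e^{2iθ} − μ|²/(1 − |μ|²) = 1 + (R′(θ)/R(θ))², a₁ := |e^{2iθ} + μ|²/(1 − |μ|²) = 1, and a₂ := 2 Im( conj(e^{2iθ} + μ)(e^{2iθ} − μ) )/(1 − |μ|²) = −2 R′(θ)/R(θ). -/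
/-!
Near `z₀ = r e^{iθ}` the map is `f z = R(φ z) z`, where `φ = argNear θ` is a smooth branch of
the argument with `φ z₀ = θ` and `dφ(w) = Im(w / z₀)`. Hence `Df(w) = R(θ) w + R'(θ) Im(w / z₀) z₀`,
whose Wirtinger derivatives are read off from `Im(z₀⁻¹) + i Re(z₀⁻¹) = i conj(z₀⁻¹)` and
`z₀ / conj z₀ = e^{2iθ}`. Since `|e^{2iθ}| = 1`, the dilatation is `e^{2iθ} ν` with
`ν = i b / (2a - i b)`, `a = R θ`, `b = R'`; all coefficients are then rational functions of `a`
and `b`, with common denominator `1 - |ν|² = 4a² / (4a² + b²)`.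
-/

open scoped Real ComplexConjugate

namespace Complex

noncomputable def argNear (θ : ℝ) (z : ℂ) : ℝ := θ + arg (z * exp (-(θ * I)))

theorem norm_mul_exp_argNear_mul_I (θ : ℝ) (z : ℂ) : ‖z‖ * exp (argNear θ z * I) = z := by
  have hθ : ‖exp (-(θ * I))‖ = 1 := by
    rw [← neg_mul, ← ofReal_neg, norm_exp_ofReal_mul_I]
  calc (‖z‖ : ℂ) * exp (argNear θ z * I)
      = exp (θ * I) * (‖z * exp (-(θ * I))‖ * exp (arg (z * exp (-(θ * I))) * I)) := by
        rw [argNear, norm_mul, hθ, mul_one, ofReal_add, add_mul, exp_add]; ring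
    _ = z := by
        rw [norm_mul_exp_arg_mul_I, mul_left_comm, ← exp_add, add_neg_cancel, exp_zero, mul_one]

theorem argNear_ofReal_mul_exp {r : ℝ} (hr : 0 < r) (θ : ℝ) :
    argNear θ (r * exp (θ * I)) = θ := by
  rw [argNear, mul_assoc, ← exp_add, add_neg_cancel, exp_zero, mul_one,
    arg_ofReal_of_nonneg hr.le, add_zero]

theorem hasFDerivAt_argNear {r : ℝ} (hr : 0 < r) (θ : ℝ) :
    HasFDerivAt (argNear θ)
      (imCLM.comp ((r * exp (θ * I))⁻¹ • ContinuousLinearMap.id ℝ ℂ)) (r * exp (θ * I)) := by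
  set z₀ : ℂ := r * exp (θ * I)
  have hw₀ : z₀ * exp (-(θ * I)) = r := by
    rw [mul_assoc, ← exp_add, add_neg_cancel, exp_zero, mul_one]
  have hlog : HasDerivAt (fun z => log (z * exp (-(θ * I)))) z₀⁻¹ z₀ := by
    have hslit : z₀ * exp (-(θ * I)) ∈ slitPlane := by
      rw [hw₀]; exact ofReal_mem_slitPlane.mpr hr
    refine ((hasDerivAt_log hslit).comp z₀
      ((hasDerivAt_id z₀).mul_const (exp (-(θ * I))))).congr_deriv ?_
    field_simp [exp_ne_zero]
  have harg : argNear θ = fun z => θ + im (log (z * exp (-(θ * I)))) := by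
    ext z; rw [argNear, log_im]
  rw [harg]
  refine ((imCLM.hasFDerivAt.comp z₀ (hlog.hasFDerivAt.restrictScalars ℝ)).const_add θ).congr_fderiv
    (ContinuousLinearMap.ext fun w => ?_)
  simp [mul_comm]

noncomputable def wirtingerDeriv (D : ℂ →L[ℝ] ℂ) : ℂ := (D 1 - I * D I) / 2

noncomputable def wirtingerDerivConj (D : ℂ →L[ℝ] ℂ) : ℂ := (D 1 + I * D I) / 2

noncomputable def radialStretchDeriv (a b : ℝ) (z₀ : ℂ) : ℂ →L[ℝ] ℂ :=
  a • ContinuousLinearMap.id ℝ ℂ +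
    (b • imCLM.comp (z₀⁻¹ • ContinuousLinearMap.id ℝ ℂ)).smulRight z₀

@[simp]
theorem radialStretchDeriv_apply (a b : ℝ) (z₀ w : ℂ) :
    radialStretchDeriv a b z₀ w = a * w + b * (z₀⁻¹ * w).im * z₀ := by
  simp [radialStretchDeriv]

theorem hasFDerivAt_radialStretch {R : ℝ → ℝ} {R' θ r : ℝ} (hr : 0 < r)
    (hR' : HasDerivAt R R' θ) {f : ℂ → ℂ}
    (hf : ∀ s : ℝ, 0 < s → ∀ t : ℝ, f (s * exp (t * I)) = R t * s * exp (t * I)) :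
    HasFDerivAt f (radialStretchDeriv (R θ) R' (r * exp (θ * I))) (r * exp (θ * I)) := by
  set z₀ : ℂ := r * exp (θ * I)
  have hz₀ : z₀ ≠ 0 := mul_ne_zero (ofReal_ne_zero.mpr hr.ne') (exp_ne_zero _)
  have hfg : f =ᶠ[nhds z₀] fun z => R (argNear θ z) • z := by
    filter_upwards [compl_singleton_mem_nhds hz₀] with z hz
    have hpolar := norm_mul_exp_argNear_mul_I θ z
    rw [← hpolar, hf _ (norm_pos_iff.mpr hz), real_smul, mul_assoc, hpolar]
  have hRφ : HasDerivAt R R' (argNear θ z₀) := by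
    rwa [argNear_ofReal_mul_exp hr]
  have hg := (hRφ.comp_hasFDerivAt z₀ (hasFDerivAt_argNear hr θ)).smul (hasFDerivAt_id z₀)
  rw [Function.comp_apply, argNear_ofReal_mul_exp hr] at hg
  exact hg.congr_of_eventuallyEq hfg

theorem wirtingerDerivConj_radialStretchDeriv (a b : ℝ) (z₀ : ℂ) :
    wirtingerDerivConj (radialStretchDeriv a b z₀) = z₀ / conj z₀ * I * b / 2 := by
  have hconj : z₀ / conj z₀ = z₀ * (z₀⁻¹.re - z₀⁻¹.im * I) := by
    have : conj z₀⁻¹ = z₀⁻¹.re - z₀⁻¹.im * I := by apply Complex.ext <;> simp [neg_div]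
    rw [← this, map_inv₀, div_eq_mul_inv]
  simp only [wirtingerDerivConj, radialStretchDeriv_apply, hconj, mul_one, mul_I_im]
  linear_combination (a + b * z₀⁻¹.im * z₀) / 2 * I_sq

theorem wirtingerDeriv_radialStretchDeriv (a b : ℝ) {z₀ : ℂ} (hz₀ : z₀ ≠ 0) :
    wirtingerDeriv (radialStretchDeriv a b z₀) = (2 * a - I * b) / 2 := by
  have hinv : z₀ * (z₀⁻¹.re + z₀⁻¹.im * I) = 1 := by rw [re_add_im, mul_inv_cancel₀ hz₀]
  simp only [wirtingerDeriv, radialStretchDeriv_apply, mul_one, mul_I_im]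
  linear_combination (-(a : ℂ) + b * z₀⁻¹.im * z₀) / 2 * I_sq - I * b / 2 * hinv

theorem ofReal_mul_exp_div_conj {r : ℝ} (hr : r ≠ 0) (θ : ℝ) :
    r * exp (θ * I) / conj (r * exp (θ * I)) = exp (2 * θ * I) := by
  rw [map_mul, conj_ofReal, ← exp_conj, map_mul, conj_ofReal, conj_I, mul_div_mul_left _ _
    (ofReal_ne_zero.mpr hr), div_eq_mul_inv, ← exp_neg, ← exp_add]
  ring_nf

noncomputable def stretchDilatation (a b : ℝ) : ℂ := I * b / (2 * a - I * b)

section StretchDilatation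

variable (a b : ℝ)

theorem normSq_two_mul_sub_I_mul : normSq (2 * a - I * b) = 4 * a ^ 2 + b ^ 2 := by
  simp [normSq_apply]; ring

theorem stretchDilatation_re : (stretchDilatation a b).re = -b ^ 2 / (4 * a ^ 2 + b ^ 2) := by
  simp [stretchDilatation, div_re, normSq_two_mul_sub_I_mul]; ring

theorem stretchDilatation_im : (stretchDilatation a b).im = 2 * a * b / (4 * a ^ 2 + b ^ 2) := by
  simp [stretchDilatation, div_im, normSq_two_mul_sub_I_mul]; ring

variable {a}

theorem one_sub_norm_stretchDilatation_sq (ha : a ≠ 0) :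
    1 - ‖stretchDilatation a b‖ ^ 2 = 4 * a ^ 2 / (4 * a ^ 2 + b ^ 2) := by
  rw [← normSq_eq_norm_sq, normSq_apply, stretchDilatation_re, stretchDilatation_im]
  field_simp
  ring

theorem norm_one_sub_stretchDilatation_sq (ha : a ≠ 0) :
    ‖1 - stretchDilatation a b‖ ^ 2 = 4 * (a ^ 2 + b ^ 2) / (4 * a ^ 2 + b ^ 2) := by
  rw [← normSq_eq_norm_sq, normSq_apply, sub_re, sub_im, one_re, one_im, stretchDilatation_re,
    stretchDilatation_im]
  field_simp
  ring

theorem norm_one_add_stretchDilatation_sq (ha : a ≠ 0) :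
    ‖1 + stretchDilatation a b‖ ^ 2 = 4 * a ^ 2 / (4 * a ^ 2 + b ^ 2) := by
  rw [← normSq_eq_norm_sq, normSq_apply, add_re, add_im, one_re, one_im, stretchDilatation_re,
    stretchDilatation_im]
  field_simp
  ring

theorem im_conj_one_add_stretchDilatation_mul (ha : a ≠ 0) :
    (conj (1 + stretchDilatation a b) * (1 - stretchDilatation a b)).im
      = -(4 * a * b) / (4 * a ^ 2 + b ^ 2) := by
  simp only [mul_im, conj_re, conj_im, add_re, add_im, sub_re, sub_im, one_re, one_im,
    stretchDilatation_re, stretchDilatation_im]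
  field_simp
  ring

theorem dilatation_coefficients (ha : a ≠ 0) {E : ℂ} (hE : ‖E‖ = 1) :
    let μ : ℂ := E * I * b / (2 * a - I * b)
    ‖μ‖ < 1 ∧
    ‖E - μ‖ ^ 2 / (1 - ‖μ‖ ^ 2) = 1 + (b / a) ^ 2 ∧
    ‖E + μ‖ ^ 2 / (1 - ‖μ‖ ^ 2) = 1 ∧
    2 * (conj (E + μ) * (E - μ)).im / (1 - ‖μ‖ ^ 2) = -(2 * b / a) := by
  intro μ
  set ν := stretchDilatation a b
  have hμ : μ = E * ν := by simp only [μ, ν, stretchDilatation]; ring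
  have hEE : conj E * E = 1 := by
    rw [mul_comm, mul_conj, normSq_eq_norm_sq, hE, one_pow, ofReal_one]
  have hnorm : ‖μ‖ = ‖ν‖ := by rw [hμ, norm_mul, hE, one_mul]
  have hsub : ‖E - μ‖ = ‖1 - ν‖ := by
    rw [hμ, show E - E * ν = E * (1 - ν) by ring, norm_mul, hE, one_mul]
  have hadd : ‖E + μ‖ = ‖1 + ν‖ := by
    rw [hμ, show E + E * ν = E * (1 + ν) by ring, norm_mul, hE, one_mul]
  have hprod : conj (E + μ) * (E - μ) = conj (1 + ν) * (1 - ν) := by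
    rw [hμ, show E + E * ν = E * (1 + ν) by ring, show E - E * ν = E * (1 - ν) by ring,
      map_mul]
    linear_combination (conj (1 + ν) * (1 - ν)) * hEE
  have hgap := one_sub_norm_stretchDilatation_sq b ha
  rw [hnorm, hsub, hadd, hprod, hgap, norm_one_sub_stretchDilatation_sq b ha,
    norm_one_add_stretchDilatation_sq b ha, im_conj_one_add_stretchDilatation_mul b ha]
  refine ⟨?_, by field_simp, by field_simp, by field_simp⟩
  have : ‖ν‖ ^ 2 < 1 := by
    have : 0 < 4 * a ^ 2 / (4 * a ^ 2 + b ^ 2) := by positivity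
    linarith
  exact (pow_lt_one_iff_of_nonneg (norm_nonneg ν) two_ne_zero).mp this

end StretchDilatation

end Complex

theorem stmt_5_general (R : ℝ → ℝ) (hR_pos : ∀ t, 0 < R t) (θ r : ℝ) (hr : 0 < r) (R' : ℝ) (hR' : HasDerivAt R R' θ)
    (f : ℂ → ℂ)
    (hf : ∀ s : ℝ, 0 < s → ∀ t : ℝ,
      f (s * Complex.exp (t * Complex.I)) = R t * s * Complex.exp (t * Complex.I)) :
    ∃ D : ℂ →L[ℝ] ℂ, HasFDerivAt f D (r * Complex.exp (θ * Complex.I)) ∧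
      (D 1 + Complex.I * D Complex.I) / 2 = Complex.exp (2*θ*Complex.I) * Complex.I * R' / 2 ∧
      (D 1 - Complex.I * D Complex.I) / 2 = (2 * R θ - Complex.I * R') / 2 ∧
      (let μ : ℂ := Complex.exp (2*θ*Complex.I) * Complex.I * R' / (2 * R θ - Complex.I * R')
       ((D 1 + Complex.I * D Complex.I) / 2) / ((D 1 - Complex.I * D Complex.I) / 2) = μ ∧
       ‖μ‖ < 1 ∧
       (‖Complex.exp (2*θ*Complex.I) - μ‖)^2 / (1 - (‖μ‖)^2)
         = 1 + (R' / R θ)^2 ∧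
       (‖Complex.exp (2*θ*Complex.I) + μ‖)^2 / (1 - (‖μ‖)^2) = 1 ∧
       2 * ((starRingEnd ℂ) (Complex.exp (2*θ*Complex.I) + μ)
           * (Complex.exp (2*θ*Complex.I) - μ)).im / (1 - (‖μ‖)^2)
         = -(2 * R' / R θ)) := by
  set z₀ : ℂ := r * Complex.exp (θ * Complex.I)
  have hz₀ : z₀ ≠ 0 :=
    mul_ne_zero (Complex.ofReal_ne_zero.mpr hr.ne') (Complex.exp_ne_zero _)
  have hdbar := Complex.wirtingerDerivConj_radialStretchDeriv (R θ) R' z₀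
  rw [Complex.ofReal_mul_exp_div_conj hr.ne'] at hdbar
  have hd := Complex.wirtingerDeriv_radialStretchDeriv (R θ) R' hz₀
  have hE : ‖Complex.exp (2 * θ * Complex.I)‖ = 1 := by
    rw [show 2 * (θ : ℂ) * Complex.I = (2 * θ : ℝ) * Complex.I by push_cast; ring,
      Complex.norm_exp_ofReal_mul_I]
  refine ⟨_, Complex.hasFDerivAt_radialStretch hr hR' hf, hdbar, hd, ?_,
    Complex.dilatation_coefficients R' (hR_pos θ).ne' hE⟩
  exact (congrArg₂ (· / ·) hdbar hd).trans (div_div_div_cancel_right₀ two_ne_zero _ _)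

/-- the starlike stretch map `f(re^{iθ}) = R(θ) r e^{iθ}` has Wirtinger
derivatives `∂̄f = e^{2iθ} i R′(θ)/2` and `∂f = (2R(θ) − iR′(θ))/2` at `re^{iθ}`, hence
complex dilatation `μ = e^{2iθ} iR′(θ)/(2R(θ) − iR′(θ))` with `|μ| < 1`, and the associated
coefficients are `a₀ = 1 + (R′/R)²`, `a₁ = 1`, `a₂ = −2R′/R`.  Here `∂f = (D1 - i·Di)/2`
and `∂̄f = (D1 + i·Di)/2` where `D` is the real Fréchet derivative of `f`. -/
theorem stmt_5 (R : ℝ → ℝ) (hR_pos : ∀ t, 0 < R t) (hR_per : ∀ t, R (t + 2*π) = R t)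
    (θ r : ℝ) (hr : 0 < r) (R' : ℝ) (hR' : HasDerivAt R R' θ)
    (f : ℂ → ℂ)
    (hf : ∀ s : ℝ, 0 < s → ∀ t : ℝ,
      f (s * Complex.exp (t * Complex.I)) = R t * s * Complex.exp (t * Complex.I)) :
    ∃ D : ℂ →L[ℝ] ℂ, HasFDerivAt f D (r * Complex.exp (θ * Complex.I)) ∧
      (D 1 + Complex.I * D Complex.I) / 2 = Complex.exp (2*θ*Complex.I) * Complex.I * R' / 2 ∧
      (D 1 - Complex.I * D Complex.I) / 2 = (2 * R θ - Complex.I * R') / 2 ∧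
      (let μ : ℂ := Complex.exp (2*θ*Complex.I) * Complex.I * R' / (2 * R θ - Complex.I * R')
       ((D 1 + Complex.I * D Complex.I) / 2) / ((D 1 - Complex.I * D Complex.I) / 2) = μ ∧
       ‖μ‖ < 1 ∧
       (‖Complex.exp (2*θ*Complex.I) - μ‖)^2 / (1 - (‖μ‖)^2)
         = 1 + (R' / R θ)^2 ∧
       (‖Complex.exp (2*θ*Complex.I) + μ‖)^2 / (1 - (‖μ‖)^2) = 1 ∧
       2 * ((starRingEnd ℂ) (Complex.exp (2*θ*Complex.I) + μ)
           * (Complex.exp (2*θ*Complex.I) - μ)).im / (1 - (‖μ‖)^2)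
         = -(2 * R' / R θ)) :=
  stmt_5_general R hR_pos θ r hr R' hR' f hf
end

section
/- Let A > 0 be real and B ∈ ℂ with |B| < A, and set c = B/A. Define h(ζ) = (A + 2 Re( conj(ζ) B ) + |ζ|² A)/(1 − |ζ|²) for ζ in the open unit disk { |ζ| < 1 }. Then the minimum of h over the open unit disk equals √(A² − |B|²), and it is attained at exactly one point, namely ζ_min = −c/(1 + √(1 − |c|²)). -/
/-!
Completing the square: with `m = √(A² - ‖B‖²)` and `ζ₀ = -B / (A + m)`, one has
`A + 2⟪ζ, B⟫ + ‖ζ‖² A = m (1 - ‖ζ‖²) + (A + m) ‖ζ - ζ₀‖²`,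
because `‖B‖² = (A - m)(A + m)`. Dividing by `1 - ‖ζ‖² > 0` gives
`h ζ = m + (A + m) ‖ζ - ζ₀‖² / (1 - ‖ζ‖²)`, which is `≥ m` with equality exactly at `ζ₀`.
-/

theorem add_sqrt_sub_sq_norm_pos {E : Type*} [SeminormedAddCommGroup E] {A : ℝ} {B : E}
    (hB : ‖B‖ < A) : 0 < A + √(A ^ 2 - ‖B‖ ^ 2) :=
  add_pos_of_pos_of_nonneg ((norm_nonneg B).trans_lt hB) (Real.sqrt_nonneg _)

section RealInnerProductSpace

variable {E : Type*} [NormedAddCommGroup E] [InnerProductSpace ℝ E]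

/-- On `ℂ`, `⟪ζ, B⟫_ℝ = Re (conj ζ * B)`, so this is the paper's `h`. -/
noncomputable def transplantedMoment (A : ℝ) (B ζ : E) : ℝ :=
  (A + 2 * inner ℝ ζ B + ‖ζ‖ ^ 2 * A) / (1 - ‖ζ‖ ^ 2)

noncomputable def momentMinimizer (A : ℝ) (B : E) : E :=
  -((A + √(A ^ 2 - ‖B‖ ^ 2))⁻¹ • B)

theorem add_two_inner_add_sq_mul_eq {A m : ℝ} {B : E} (hm : m ^ 2 = A ^ 2 - ‖B‖ ^ 2)
    (hAm : A + m ≠ 0) (ζ : E) :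
    A + 2 * inner ℝ ζ B + ‖ζ‖ ^ 2 * A =
      m * (1 - ‖ζ‖ ^ 2) + (A + m) * ‖ζ + (A + m)⁻¹ • B‖ ^ 2 := by
  rw [norm_add_sq_real, inner_smul_right, norm_smul, Real.norm_eq_abs, mul_pow, sq_abs]
  field_simp
  linear_combination (-1 : ℝ) * hm

variable {A : ℝ} {B : E}

theorem norm_momentMinimizer_lt_one (hB : ‖B‖ < A) : ‖momentMinimizer A B‖ < 1 := by
  have hpos := add_sqrt_sub_sq_norm_pos hB
  rw [momentMinimizer, norm_neg, norm_smul, norm_inv, Real.norm_of_nonneg hpos.le,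
    inv_mul_lt_one₀ hpos]
  linarith [Real.sqrt_nonneg (A ^ 2 - ‖B‖ ^ 2)]

theorem transplantedMoment_eq_add (hB : ‖B‖ < A) {ζ : E} (hζ : ‖ζ‖ < 1) :
    transplantedMoment A B ζ = √(A ^ 2 - ‖B‖ ^ 2) +
      (A + √(A ^ 2 - ‖B‖ ^ 2)) * ‖ζ - momentMinimizer A B‖ ^ 2 / (1 - ‖ζ‖ ^ 2) := by
  have hden : 1 - ‖ζ‖ ^ 2 ≠ 0 := by nlinarith [norm_nonneg ζ]
  rw [transplantedMoment, momentMinimizer, sub_neg_eq_add,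
    add_two_inner_add_sq_mul_eq (Real.sq_sqrt (by nlinarith [norm_nonneg B]))
      (add_sqrt_sub_sq_norm_pos hB).ne' ζ]
  field_simp

theorem transplantedMoment_momentMinimizer (hB : ‖B‖ < A) :
    transplantedMoment A B (momentMinimizer A B) = √(A ^ 2 - ‖B‖ ^ 2) := by
  simp [transplantedMoment_eq_add hB (norm_momentMinimizer_lt_one hB)]

theorem transplantedMoment_sub_sqrt_pos (hB : ‖B‖ < A) {ζ : E} (hζ : ‖ζ‖ < 1)
    (hne : ζ ≠ momentMinimizer A B) :
    0 < transplantedMoment A B ζ - √(A ^ 2 - ‖B‖ ^ 2) := by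
  have hden : 0 < 1 - ‖ζ‖ ^ 2 := by nlinarith [norm_nonneg ζ]
  have hdist : 0 < ‖ζ - momentMinimizer A B‖ := norm_pos_iff.mpr (sub_ne_zero.mpr hne)
  have hpos := add_sqrt_sub_sq_norm_pos hB
  rw [transplantedMoment_eq_add hB hζ, add_sub_cancel_left]
  positivity

theorem sqrt_le_transplantedMoment (hB : ‖B‖ < A) {ζ : E} (hζ : ‖ζ‖ < 1) :
    √(A ^ 2 - ‖B‖ ^ 2) ≤ transplantedMoment A B ζ := by
  rcases eq_or_ne ζ (momentMinimizer A B) with rfl | hne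
  · exact (transplantedMoment_momentMinimizer hB).ge
  · linarith [transplantedMoment_sub_sqrt_pos hB hζ hne]

theorem eq_momentMinimizer_of_transplantedMoment_eq (hB : ‖B‖ < A) {ζ : E} (hζ : ‖ζ‖ < 1)
    (heq : transplantedMoment A B ζ = √(A ^ 2 - ‖B‖ ^ 2)) : ζ = momentMinimizer A B := by
  by_contra hne
  linarith [transplantedMoment_sub_sqrt_pos hB hζ hne]

end RealInnerProductSpace

theorem Complex.momentMinimizer_eq {A : ℝ} {B : ℂ} (hB : ‖B‖ < A) :
    momentMinimizer A B = -(B / A) / (1 + (√(1 - ‖B / A‖ ^ 2) : ℂ)) := by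
  have hA : 0 < A := (norm_nonneg B).trans_lt hB
  have hsqrt : √(1 - ‖B / A‖ ^ 2) = √(A ^ 2 - ‖B‖ ^ 2) / A := by
    rw [norm_div, Complex.norm_real, Real.norm_of_nonneg hA.le, div_pow,
      one_sub_div (pow_ne_zero 2 hA.ne'), Real.sqrt_div' _ (sq_nonneg A),
      Real.sqrt_sq hA.le]
  have hpos : ((A + √(A ^ 2 - ‖B‖ ^ 2) : ℝ) : ℂ) ≠ 0 :=
    Complex.ofReal_ne_zero.mpr (add_sqrt_sub_sq_norm_pos hB).ne'
  have hA' : (A : ℂ) ≠ 0 := Complex.ofReal_ne_zero.mpr hA.ne'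
  rw [momentMinimizer, hsqrt, Complex.real_smul]
  push_cast at hpos ⊢
  field_simp

theorem stmt_8_general (A : ℝ) (B : ℂ) (hB : ‖B‖ < A) :
    let c : ℂ := B / (A : ℂ)
    let ζmin : ℂ := -c / ((1 : ℂ) + (Real.sqrt (1 - (‖c‖)^2) : ℂ))
    let h : ℂ → ℝ := fun ζ =>
      (A + 2 * ((starRingEnd ℂ) ζ * B).re + (‖ζ‖)^2 * A) / (1 - (‖ζ‖)^2)
    ‖ζmin‖ < 1 ∧
    h ζmin = Real.sqrt (A^2 - (‖B‖)^2) ∧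
    ∀ ζ : ℂ, ‖ζ‖ < 1 →
      Real.sqrt (A^2 - (‖B‖)^2) ≤ h ζ ∧
      (h ζ = Real.sqrt (A^2 - (‖B‖)^2) → ζ = ζmin) := by
  intro c ζmin h
  have hζmin : ζmin = momentMinimizer A B := (Complex.momentMinimizer_eq hB).symm
  have hh : ∀ ζ, h ζ = transplantedMoment A B ζ := fun ζ => by
    simp only [h, transplantedMoment, Complex.inner, mul_comm B]
  simp only [hh, hζmin]
  exact ⟨norm_momentMinimizer_lt_one hB, transplantedMoment_momentMinimizer hB,
    fun ζ hζ => ⟨sqrt_le_transplantedMoment hB hζ,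
      eq_momentMinimizer_of_transplantedMoment_eq hB hζ⟩⟩

/-- for real `A > 0` and `B ∈ ℂ` with `|B| < A`, the function
`h(ζ) = (A + 2 Re(conj(ζ) B) + |ζ|² A)/(1 − |ζ|²)` on the open unit disk attains the minimum
value `√(A² − |B|²)` at the unique point `ζ_min = −c/(1 + √(1 − |c|²))`, where `c = B/A`. -/
theorem stmt_8 (A : ℝ) (hA : 0 < A) (B : ℂ) (hB : ‖B‖ < A) :
    let c : ℂ := B / (A : ℂ)
    let ζmin : ℂ := -c / ((1 : ℂ) + (Real.sqrt (1 - (‖c‖)^2) : ℂ))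
    let h : ℂ → ℝ := fun ζ =>
      (A + 2 * ((starRingEnd ℂ) ζ * B).re + (‖ζ‖)^2 * A) / (1 - (‖ζ‖)^2)
    ‖ζmin‖ < 1 ∧
    h ζmin = Real.sqrt (A^2 - (‖B‖)^2) ∧
    ∀ ζ : ℂ, ‖ζ‖ < 1 →
      Real.sqrt (A^2 - (‖B‖)^2) ≤ h ζ ∧
      (h ζ = Real.sqrt (A^2 - (‖B‖)^2) → ζ = ζmin) :=
  stmt_8_general A B hB
end

section
/- Let A > 0 be real and B ∈ ℂ with |B| < A, and set c = B/A. Then the equation B + 2Aζ + conj(B) ζ² = 0 has exactly one solution ζ in the open unit disk { |ζ| < 1 }, namely ζ = −c/(1 + √(1 − |c|²)). (In particular, if B = 0 the unique solution in the disk is ζ = 0.) -/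
/-!
Dividing by `A` reduces the equation to `c + 2ζ + conj(c) ζ² = 0` with `‖c‖ < 1`. With
`s = √(1 - ‖c‖²)`, the point `ζ = -c/(1 + s)` is a root because `(1 + s)² - 2(1 + s) + ‖c‖² = 0`,
and `‖ζ‖ ≤ ‖c‖`. If `z, w` are roots, then `(z - w)(2 + conj(c)(z + w)) = 0`, and the second
factor cannot vanish inside the disk since there `‖conj(c)(z + w)‖ < 2`.
-/

open ComplexConjugate

noncomputable def diskRoot (c : ℂ) : ℂ := -c / (1 + (√(1 - ‖c‖ ^ 2) : ℂ))

lemma one_add_sqrt_one_sub_norm_sq_ne_zero (c : ℂ) : (1 : ℂ) + (√(1 - ‖c‖ ^ 2) : ℂ) ≠ 0 := by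
  exact_mod_cast (by positivity : (0 : ℝ) < 1 + √(1 - ‖c‖ ^ 2)).ne'

lemma norm_diskRoot_le (c : ℂ) : ‖diskRoot c‖ ≤ ‖c‖ := by
  have hs : 0 ≤ √(1 - ‖c‖ ^ 2) := Real.sqrt_nonneg _
  rw [diskRoot, norm_div, norm_neg, ← Complex.ofReal_one, ← Complex.ofReal_add,
    Complex.norm_real, Real.norm_of_nonneg (by positivity)]
  exact div_le_self (norm_nonneg c) (by linarith)

lemma diskRoot_add_two_mul_add_conj_mul_sq_eq_zero {c : ℂ} (hc : ‖c‖ ≤ 1) :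
    c + 2 * diskRoot c + conj c * diskRoot c ^ 2 = 0 := by
  have hs : (√(1 - ‖c‖ ^ 2) : ℂ) ^ 2 = 1 - (‖c‖ : ℂ) ^ 2 := by
    exact_mod_cast Real.sq_sqrt (by nlinarith [norm_nonneg c])
  have hu := one_add_sqrt_one_sub_norm_sq_ne_zero c
  rw [diskRoot]
  field_simp
  linear_combination c * hs + c * Complex.conj_mul' c

lemma eq_of_add_two_mul_add_conj_mul_sq_eq_zero {c z w : ℂ} (hc : ‖c‖ ≤ 1)
    (hz : ‖z‖ < 1) (hw : ‖w‖ < 1) (hz0 : c + 2 * z + conj c * z ^ 2 = 0)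
    (hw0 : c + 2 * w + conj c * w ^ 2 = 0) : z = w := by
  have hfactor : (z - w) * (2 + conj c * (z + w)) = 0 := by linear_combination hz0 - hw0
  have hsmall : ‖conj c * (z + w)‖ < 2 := calc
    ‖conj c * (z + w)‖ ≤ 1 * (‖z‖ + ‖w‖) := by
      rw [norm_mul, Complex.norm_conj]
      exact mul_le_mul hc (norm_add_le z w) (norm_nonneg _) zero_le_one
    _ < 2 := by linarith
  have hne : 2 + conj c * (z + w) ≠ 0 := by
    intro h
    rw [eq_neg_of_add_eq_zero_right h, norm_neg, Complex.norm_ofNat] at hsmall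
    exact lt_irrefl _ hsmall
  exact sub_eq_zero.mp ((mul_eq_zero.mp hfactor).resolve_right hne)

lemma add_two_mul_add_conj_mul_sq_eq_zero_iff_div {a : ℝ} (ha : a ≠ 0) (b z : ℂ) :
    b + 2 * a * z + conj b * z ^ 2 = 0 ↔ b / a + 2 * z + conj (b / a) * z ^ 2 = 0 := by
  have ha' : (a : ℂ) ≠ 0 := by exact_mod_cast ha
  have hscale : b + 2 * a * z + conj b * z ^ 2 = a * (b / a + 2 * z + conj (b / a) * z ^ 2) := by
    rw [map_div₀, Complex.conj_ofReal]
    field_simp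
  rw [hscale, mul_eq_zero, or_iff_right ha']

/-- for real `A > 0` and `B ∈ ℂ` with `|B| < A`, the quadratic equation
`B + 2Aζ + conj(B) ζ² = 0` has exactly one solution in the open unit disk, namely
`ζ = −c/(1 + √(1 − |c|²))` with `c = B/A`; in particular if `B = 0` that solution is `0`. -/
theorem stmt_9 (A : ℝ) (hA : 0 < A) (B : ℂ) (hB : ‖B‖ < A) :
    let c : ℂ := B / (A : ℂ)
    let ζmin : ℂ := -c / ((1 : ℂ) + (Real.sqrt (1 - ‖c‖^2) : ℂ))
    ‖ζmin‖ < 1 ∧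
    B + 2 * A * ζmin + (starRingEnd ℂ) B * ζmin^2 = 0 ∧
    (∀ ζ : ℂ, ‖ζ‖ < 1 →
      B + 2 * A * ζ + (starRingEnd ℂ) B * ζ^2 = 0 → ζ = ζmin) ∧
    (B = 0 → ζmin = 0) := by
  intro c ζmin
  have hc : ‖c‖ < 1 := by
    rw [norm_div, Complex.norm_real, Real.norm_of_nonneg hA.le, div_lt_one hA]
    exact hB
  have hroot : c + 2 * ζmin + conj c * ζmin ^ 2 = 0 :=
    diskRoot_add_two_mul_add_conj_mul_sq_eq_zero hc.le
  have hdisk : ‖ζmin‖ < 1 := (norm_diskRoot_le c).trans_lt hc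
  refine ⟨hdisk, (add_two_mul_add_conj_mul_sq_eq_zero_iff_div hA.ne' B ζmin).2 hroot,
    fun ζ hζ h ↦ ?_, fun h0 ↦ by simp [ζmin, c, h0]⟩
  exact eq_of_add_two_mul_add_conj_mul_sq_eq_zero hc.le hζ hdisk
    ((add_two_mul_add_conj_mul_sq_eq_zero_iff_div hA.ne' B ζ).1 h) hroot
end

section
/- Let γ : [0,L] → ℝ² be measurable and N : [0,L] → ℝ² be measurable with |N(s)| = 1 for all s, and let U ⊂ ℝ² be an open convex set such that (γ(s) − ω) · N(s) > 0 for all s ∈ [0,L] and all ω ∈ U. Assume ω ↦ ∫₀^L |γ(s) − ω|²/((γ(s) − ω)·N(s)) ds is finite on U. Then this function of ω is convex on U; moreover, if for every ω ∈ U the image {γ(s) : s ∈ [0,L]} is not contained in a single line through ω (more precisely: for every ω ∈ U and every nonzero y ∈ ℝ², the set of s with γ(s) − ω not parallel to y has positive measure), then the function is strictly convex on U. -/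
open MeasureTheory
open scoped RealInnerProductSpace

/-!
For fixed `n`, `f(v) = ‖v‖² / ⟪v, n⟫` is convex on the half-space `⟪v, n⟫ > 0`:
with `p = ⟪u, n⟫`, `q = ⟪v, n⟫` one has the identity
`a f(u) + b f(v) - f(a u + b v) = a b ‖q u - p v‖² / (p q (a p + b q))`,
so the defect vanishes only when `u` and `v` lie on a common ray (`f` is positively homogeneous).
Composing with `ω ↦ γ s - ω` and integrating over `s` gives convexity of the integral. For
`ω₁ ≠ ω₂`, the vectors `γ s - ω₁`, `γ s - ω₂` lie on a common ray only if `γ s - ω` is parallel to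
`ω₂ - ω₁` for the intermediate point `ω`, so the spreading hypothesis makes the defect positive on
a set of positive measure.
-/

theorem SameRay.exists_smul_add_smul_eq_smul_sub {R M : Type*} [Field R] [LinearOrder R]
    [IsStrictOrderedRing R] [AddCommGroup M] [Module R M] {u v : M} (h : SameRay R u v)
    (huv : u ≠ v) (a b : R) : ∃ t : R, a • u + b • v = t • (u - v) := by
  obtain ⟨w, r₁, r₂, -, -, -, rfl, rfl⟩ := h.exists_eq_smul
  have hr : r₁ - r₂ ≠ 0 := sub_ne_zero.mpr fun h => huv (by rw [h])
  refine ⟨(a * r₁ + b * r₂) / (r₁ - r₂), ?_⟩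
  rw [← sub_smul, smul_smul, smul_smul, smul_smul, div_mul_cancel₀ _ hr, add_smul]

section NormSqDivInner

variable {E : Type*} [NormedAddCommGroup E] [InnerProductSpace ℝ E]

theorem norm_sq_div_inner_convex_defect (u v n : E) {a b : ℝ} (hp : ⟪u, n⟫ ≠ 0)
    (hq : ⟪v, n⟫ ≠ 0) (hD : a * ⟪u, n⟫ + b * ⟪v, n⟫ ≠ 0) :
    a * (‖u‖ ^ 2 / ⟪u, n⟫) + b * (‖v‖ ^ 2 / ⟪v, n⟫) - ‖a • u + b • v‖ ^ 2 / ⟪a • u + b • v, n⟫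
      = a * b * ‖⟪v, n⟫ • u - ⟪u, n⟫ • v‖ ^ 2
          / (⟪u, n⟫ * ⟪v, n⟫ * (a * ⟪u, n⟫ + b * ⟪v, n⟫)) := by
  rw [inner_add_left, real_inner_smul_left, real_inner_smul_left, norm_add_sq_real,
    norm_sub_sq_real, norm_smul, norm_smul, norm_smul, norm_smul, real_inner_smul_left,
    real_inner_smul_left, real_inner_smul_right, real_inner_smul_right]
  simp only [Real.norm_eq_abs, mul_pow, sq_abs]
  field_simp
  ring

theorem convexOn_norm_sq_div_inner (n : E) :
    ConvexOn ℝ {v | 0 < ⟪v, n⟫} fun v => ‖v‖ ^ 2 / ⟪v, n⟫ := by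
  refine ⟨convex_halfSpace_gt ⟨fun u v => inner_add_left u v n,
    fun c u => real_inner_smul_left u n c⟩ 0, fun u hu v hv a b ha hb hab => ?_⟩
  have hD : 0 < a * ⟪u, n⟫ + b * ⟪v, n⟫ := by
    rcases ha.eq_or_lt with rfl | ha
    · simpa [show b = 1 by linarith] using hv
    · exact add_pos_of_pos_of_nonneg (mul_pos ha hu) (mul_nonneg hb hv.le)
  have hdefect := norm_sq_div_inner_convex_defect u v n hu.ne' hv.ne' hD.ne'
  have : 0 ≤ a * b * ‖⟪v, n⟫ • u - ⟪u, n⟫ • v‖ ^ 2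
      / (⟪u, n⟫ * ⟪v, n⟫ * (a * ⟪u, n⟫ + b * ⟪v, n⟫)) :=
    div_nonneg (by positivity) (mul_pos (mul_pos hu hv) hD).le
  simp only [smul_eq_mul]
  linarith

theorem norm_sq_div_inner_lt_of_not_sameRay {u v n : E} (hu : 0 < ⟪u, n⟫) (hv : 0 < ⟪v, n⟫)
    (huv : ¬SameRay ℝ u v) {a b : ℝ} (ha : 0 < a) (hb : 0 < b) :
    ‖a • u + b • v‖ ^ 2 / ⟪a • u + b • v, n⟫ < a * (‖u‖ ^ 2 / ⟪u, n⟫) + b * (‖v‖ ^ 2 / ⟪v, n⟫) := by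
  have hD : 0 < a * ⟪u, n⟫ + b * ⟪v, n⟫ := add_pos (mul_pos ha hu) (mul_pos hb hv)
  have hdefect := norm_sq_div_inner_convex_defect u v n hu.ne' hv.ne' hD.ne'
  have hw : ⟪v, n⟫ • u - ⟪u, n⟫ • v ≠ 0 :=
    sub_ne_zero.mpr fun h => huv (Or.inr (Or.inr ⟨_, _, hv, hu, h⟩))
  have : 0 < a * b * ‖⟪v, n⟫ • u - ⟪u, n⟫ • v‖ ^ 2
      / (⟪u, n⟫ * ⟪v, n⟫ * (a * ⟪u, n⟫ + b * ⟪v, n⟫)) :=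
    div_pos (by positivity) (mul_pos (mul_pos hu hv) hD)
  linarith

theorem convexOn_norm_sq_sub_div_inner (x n : E) :
    ConvexOn ℝ {ω | 0 < ⟪x - ω, n⟫} fun ω => ‖x - ω‖ ^ 2 / ⟪x - ω, n⟫ :=
  (convexOn_norm_sq_div_inner n).comp_affineMap (AffineMap.const ℝ E x - AffineMap.id ℝ E)

theorem norm_sq_sub_div_inner_lt {x n ω₁ ω₂ : E} (h₁ : 0 < ⟪x - ω₁, n⟫) (h₂ : 0 < ⟪x - ω₂, n⟫)
    (hω : ω₁ ≠ ω₂) {a b : ℝ} (ha : 0 < a) (hb : 0 < b) (hab : a + b = 1)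
    (hx : ¬∃ t : ℝ, x - (a • ω₁ + b • ω₂) = t • (ω₂ - ω₁)) :
    ‖x - (a • ω₁ + b • ω₂)‖ ^ 2 / ⟪x - (a • ω₁ + b • ω₂), n⟫
      < a * (‖x - ω₁‖ ^ 2 / ⟪x - ω₁, n⟫) + b * (‖x - ω₂‖ ^ 2 / ⟪x - ω₂, n⟫) := by
  have hx' : x - (a • ω₁ + b • ω₂) = a • (x - ω₁) + b • (x - ω₂) := by
    rw [smul_sub, smul_sub, ← add_sub_add_comm, ← add_smul, hab, one_smul]
  rw [hx']
  refine norm_sq_div_inner_lt_of_not_sameRay h₁ h₂ (fun hray => hx ?_) ha hb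
  rw [hx', ← sub_sub_sub_cancel_left ω₁ ω₂ x]
  exact hray.exists_smul_add_smul_eq_smul_sub (by simpa using hω) a b

end NormSqDivInner

section IntegralOfConvex

variable {α : Type*} [MeasurableSpace α] {μ : Measure α}

theorem integral_lt_integral_of_ae_le_of_measure_setOf_lt_ne_zero {f g : α → ℝ}
    (hf : Integrable f μ) (hg : Integrable g μ) (hle : f ≤ᵐ[μ] g)
    (hlt : μ {s | f s < g s} ≠ 0) : ∫ s, f s ∂μ < ∫ s, g s ∂μ := by
  rw [← sub_pos, ← integral_sub hg hf,
    integral_pos_iff_support_of_nonneg_ae (hle.mono fun _ => sub_nonneg.2) (hg.sub hf)]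
  exact pos_iff_ne_zero.2 (mt (measure_mono_null fun s hs => (sub_pos.2 hs).ne') hlt)

theorem integral_const_mul_add_const_mul {f g : α → ℝ} (hf : Integrable f μ)
    (hg : Integrable g μ) (a b : ℝ) :
    ∫ s, (a * f s + b * g s) ∂μ = a * ∫ s, f s ∂μ + b * ∫ s, g s ∂μ := by
  rw [integral_add (hf.const_mul a) (hg.const_mul b), integral_const_mul, integral_const_mul]

variable {E : Type*} [AddCommGroup E] [Module ℝ E] {U : Set E} {F : E → α → ℝ}

theorem convexOn_integral (hU : Convex ℝ U) (hint : ∀ ω ∈ U, Integrable (F ω) μ)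
    (hF : ∀ᵐ s ∂μ, ConvexOn ℝ U (F · s)) : ConvexOn ℝ U fun ω => ∫ s, F ω s ∂μ := by
  refine ⟨hU, fun ω₁ h₁ ω₂ h₂ a b ha hb hab => ?_⟩
  calc ∫ s, F (a • ω₁ + b • ω₂) s ∂μ
      ≤ ∫ s, (a * F ω₁ s + b * F ω₂ s) ∂μ :=
        integral_mono_ae (hint _ (hU h₁ h₂ ha hb hab))
          (((hint ω₁ h₁).const_mul a).add ((hint ω₂ h₂).const_mul b))
          (hF.mono fun _ hs => hs.2 h₁ h₂ ha hb hab)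
    _ = a * ∫ s, F ω₁ s ∂μ + b * ∫ s, F ω₂ s ∂μ :=
        integral_const_mul_add_const_mul (hint ω₁ h₁) (hint ω₂ h₂) a b

theorem strictConvexOn_integral (hU : Convex ℝ U) (hint : ∀ ω ∈ U, Integrable (F ω) μ)
    (hF : ∀ᵐ s ∂μ, ConvexOn ℝ U (F · s))
    (hstrict : ∀ ω₁ ∈ U, ∀ ω₂ ∈ U, ω₁ ≠ ω₂ → ∀ a b : ℝ, 0 < a → 0 < b → a + b = 1 →
      μ {s | F (a • ω₁ + b • ω₂) s < a * F ω₁ s + b * F ω₂ s} ≠ 0) :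
    StrictConvexOn ℝ U fun ω => ∫ s, F ω s ∂μ := by
  refine ⟨hU, fun ω₁ h₁ ω₂ h₂ hω a b ha hb hab => ?_⟩
  calc ∫ s, F (a • ω₁ + b • ω₂) s ∂μ
      < ∫ s, (a * F ω₁ s + b * F ω₂ s) ∂μ :=
        integral_lt_integral_of_ae_le_of_measure_setOf_lt_ne_zero
          (hint _ (hU h₁ h₂ ha.le hb.le hab))
          (((hint ω₁ h₁).const_mul a).add ((hint ω₂ h₂).const_mul b))
          (hF.mono fun _ hs => hs.2 h₁ h₂ ha.le hb.le hab) (hstrict ω₁ h₁ ω₂ h₂ hω a b ha hb hab)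
    _ = a * ∫ s, F ω₁ s ∂μ + b * ∫ s, F ω₂ s ∂μ :=
        integral_const_mul_add_const_mul (hint ω₁ h₁) (hint ω₂ h₂) a b

end IntegralOfConvex

theorem stmt_13_general (L : ℝ)
    (γ N : ℝ → EuclideanSpace ℝ (Fin 2))
    (U : Set (EuclideanSpace ℝ (Fin 2))) (hU_conv : Convex ℝ U)
    (hpos : ∀ s ∈ Set.Icc (0:ℝ) L, ∀ ω ∈ U, 0 < ⟪γ s - ω, N s⟫)
    (hfin : ∀ ω ∈ U,
      IntegrableOn (fun s => ‖γ s - ω‖^2 / ⟪γ s - ω, N s⟫) (Set.Icc (0:ℝ) L)) :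
    ConvexOn ℝ U (fun ω => ∫ s in Set.Icc (0:ℝ) L, ‖γ s - ω‖^2 / ⟪γ s - ω, N s⟫) ∧
    ((∀ ω ∈ U, ∀ y : EuclideanSpace ℝ (Fin 2), y ≠ 0 →
        0 < volume {s ∈ Set.Icc (0:ℝ) L | ¬ ∃ t : ℝ, γ s - ω = t • y}) →
      StrictConvexOn ℝ U
        (fun ω => ∫ s in Set.Icc (0:ℝ) L, ‖γ s - ω‖^2 / ⟪γ s - ω, N s⟫)) := by
  have hF : ∀ᵐ s ∂volume.restrict (Set.Icc 0 L),
      ConvexOn ℝ U fun ω => ‖γ s - ω‖ ^ 2 / ⟪γ s - ω, N s⟫ :=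
    (ae_restrict_iff' measurableSet_Icc).2 <| ae_of_all _ fun s hs =>
      (convexOn_norm_sq_sub_div_inner (γ s) (N s)).subset (hpos s hs) hU_conv
  refine ⟨convexOn_integral hU_conv hfin hF, fun hspread =>
    strictConvexOn_integral hU_conv hfin hF fun ω₁ h₁ ω₂ h₂ hω a b ha hb hab => ?_⟩
  have hS := hspread _ (hU_conv h₁ h₂ ha.le hb.le hab) (ω₂ - ω₁) (sub_ne_zero.2 hω.symm)
  rw [Measure.restrict_apply' measurableSet_Icc]
  refine (hS.trans_le (measure_mono ?_)).ne'
  rintro s ⟨hs, hx⟩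
  exact ⟨norm_sq_sub_div_inner_lt (hpos s hs ω₁ h₁) (hpos s hs ω₂ h₂) hω ha hb hab hx, hs⟩

/-- the function `ω ↦ ∫₀^L |γ(s) − ω|²/((γ(s) − ω)·N(s)) ds` is convex on an
open convex set `U` on which `(γ(s) − ω)·N(s) > 0`, and it is strictly convex provided that
for every `ω ∈ U` and every nonzero direction `y` the set of `s` with `γ(s) − ω` not
parallel to `y` has positive measure. -/
theorem stmt_13 (L : ℝ) (hL : 0 < L)
    (γ N : ℝ → EuclideanSpace ℝ (Fin 2))
    (hγ : Measurable γ) (hN : Measurable N)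
    (hN_unit : ∀ s ∈ Set.Icc (0:ℝ) L, ‖N s‖ = 1)
    (U : Set (EuclideanSpace ℝ (Fin 2))) (hU_open : IsOpen U) (hU_conv : Convex ℝ U)
    (hpos : ∀ s ∈ Set.Icc (0:ℝ) L, ∀ ω ∈ U, 0 < ⟪γ s - ω, N s⟫)
    (hfin : ∀ ω ∈ U,
      IntegrableOn (fun s => ‖γ s - ω‖^2 / ⟪γ s - ω, N s⟫) (Set.Icc (0:ℝ) L)) :
    ConvexOn ℝ U (fun ω => ∫ s in Set.Icc (0:ℝ) L, ‖γ s - ω‖^2 / ⟪γ s - ω, N s⟫) ∧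
    ((∀ ω ∈ U, ∀ y : EuclideanSpace ℝ (Fin 2), y ≠ 0 →
        0 < volume {s ∈ Set.Icc (0:ℝ) L | ¬ ∃ t : ℝ, γ s - ω = t • y}) →
      StrictConvexOn ℝ U
        (fun ω => ∫ s in Set.Icc (0:ℝ) L, ‖γ s - ω‖^2 / ⟪γ s - ω, N s⟫)) :=
  stmt_13_general L γ N U hU_conv hpos hfin
end

section
/- Let N ≥ 5 be an integer and define p(θ) = |sin(Nθ/2)|^{−2/N} for θ ∈ (0, 2π) (away from the zeros of sin(Nθ/2)). Then (1/2π)∫₀^{2π} p(θ) dθ = (1/π) B(1/2 − 1/N, 1/2) and (1/2π)∫₀^{2π} p(θ)² dθ = (1/π) B(1/2 − 2/N, 1/2), where B is the Euler beta function; consequently the conformal geometric factor satisfies √( [(1/2π)∫₀^{2π} p² dθ] / [(1/2π)∫₀^{2π} p dθ]² ) = Γ(1 − 4/N)^{1/2} Γ(1 − 1/N)² / Γ(1 − 2/N)². -/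
/-!
Substituting `u = Nθ/2` and using that `|sin|^a` has period `π` and is symmetric about `π/2`,
`∫₀^{2π} |sin(Nθ/2)|^a dθ = 4 ∫₀^{π/2} sin^a θ dθ`, and `x = sin²θ` turns the last integral into
`B((a+1)/2, 1/2) / 2`; this gives both moments (`a = -2/N` and `a = -4/N`). Legendre's duplication
formula rewrites `B(s, 1/2) = 2^{1-2s} π Γ(2s) / Γ(s+1/2)²`, after which the powers of `2` and `π`
cancel in the geometric factor.
-/

open MeasureTheory Set Real ProbabilityTheory

section BetaIntegral

variable {u v : ℝ}

lemma cpow_mul_one_sub_cpow_eq_ofReal {x : ℝ} (hx : x ∈ Icc (0:ℝ) 1) :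
    (x : ℂ) ^ ((u : ℂ) - 1) * (1 - (x : ℂ)) ^ ((v : ℂ) - 1)
      = ((x ^ (u - 1) * (1 - x) ^ (v - 1) : ℝ) : ℂ) := by
  rw [Complex.ofReal_mul, Complex.ofReal_cpow hx.1, Complex.ofReal_cpow (sub_nonneg.2 hx.2)]
  push_cast
  rfl

lemma intervalIntegrable_rpow_mul_one_sub_rpow (hu : 0 < u) (hv : 0 < v) :
    IntervalIntegrable (fun x : ℝ => x ^ (u - 1) * (1 - x) ^ (v - 1)) volume 0 1 := by
  refine (Complex.betaIntegral_convergent (u := u) (v := v) (by simpa) (by simpa)).norm.congr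
    fun x hx => ?_
  rw [uIoc_of_le zero_le_one] at hx
  simp only [cpow_mul_one_sub_cpow_eq_ofReal (Ioc_subset_Icc_self hx), Complex.norm_real,
    Real.norm_eq_abs]
  exact abs_of_nonneg (mul_nonneg (rpow_nonneg hx.1.le _) (rpow_nonneg (sub_nonneg.2 hx.2) _))

lemma integral_rpow_mul_one_sub_rpow (hu : 0 < u) (hv : 0 < v) :
    ∫ x in (0:ℝ)..1, x ^ (u - 1) * (1 - x) ^ (v - 1) = beta u v := by
  rw [beta_eq_betaIntegralReal u v hu hv, Complex.betaIntegral,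
    intervalIntegral.integral_congr (g := fun x : ℝ => ((x ^ (u - 1) * (1 - x) ^ (v - 1) : ℝ) : ℂ))
      fun x hx => cpow_mul_one_sub_cpow_eq_ofReal (by rwa [uIcc_of_le zero_le_one] at hx),
    intervalIntegral.integral_ofReal, Complex.ofReal_re]

end BetaIntegral

lemma hasDerivWithinAt_sin_sq {θ : ℝ} (s : Set ℝ) :
    HasDerivWithinAt (fun θ => sin θ ^ 2) (2 * sin θ * cos θ) s θ :=
  ((hasDerivAt_sin θ).pow 2).hasDerivWithinAt.congr_deriv (by ring)

lemma strictMonoOn_sin_sq : StrictMonoOn (fun θ => sin θ ^ 2) (Icc 0 (π / 2)) := by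
  intro x hx y hy hxy
  have hx' : x ∈ Icc (-(π / 2)) (π / 2) := ⟨by linarith [pi_pos, hx.1], hx.2⟩
  have hy' : y ∈ Icc (-(π / 2)) (π / 2) := ⟨by linarith [pi_pos, hy.1], hy.2⟩
  exact pow_lt_pow_left₀ (strictMonoOn_sin hx' hy' hxy)
    (sin_nonneg_of_nonneg_of_le_pi hx.1 (by linarith [hx.2, pi_pos])) two_ne_zero

lemma monotoneOn_sin_sq : MonotoneOn (fun θ => sin θ ^ 2) (Ioo 0 (π / 2)) :=
  strictMonoOn_sin_sq.monotoneOn.mono Ioo_subset_Icc_self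

lemma image_sin_sq_Ioo : (fun θ => sin θ ^ 2) '' Ioo 0 (π / 2) = Ioo 0 1 := by
  rw [ContinuousOn.image_Ioo_of_strictMonoOn (by positivity) (by fun_prop) strictMonoOn_sin_sq]
  simp

lemma deriv_sin_sq_smul_beta_integrand {θ : ℝ} (hθ : θ ∈ Ioo 0 (π / 2)) (a : ℝ) :
    (2 * sin θ * cos θ) • ((sin θ ^ 2) ^ ((a + 1) / 2 - 1) * (1 - sin θ ^ 2) ^ ((1:ℝ) / 2 - 1))
      = 2 * |sin θ| ^ a := by
  have hs : 0 < sin θ := sin_pos_of_pos_of_lt_pi hθ.1 (by linarith [hθ.2, pi_pos])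
  have hc : 0 < cos θ := cos_pos_of_mem_Ioo ⟨by linarith [hθ.1, pi_pos], hθ.2⟩
  rw [smul_eq_mul, ← cos_sq', ← rpow_natCast_mul hs.le, ← rpow_natCast_mul hc.le, abs_of_pos hs,
    show ((2:ℕ):ℝ) * ((a + 1) / 2 - 1) = a - 1 by push_cast; ring,
    show ((2:ℕ):ℝ) * (1 / 2 - 1) = -1 by norm_num, rpow_sub_one hs.ne', rpow_neg_one]
  field_simp

section SinePower

variable {a : ℝ}

lemma intervalIntegrable_abs_sin_rpow_zero_pi_div_two (ha : -1 < a) :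
    IntervalIntegrable (fun θ => |sin θ| ^ a) volume 0 (π / 2) := by
  have hbeta := intervalIntegrable_rpow_mul_one_sub_rpow (u := (a + 1) / 2) (v := 1 / 2)
    (by linarith) one_half_pos
  rw [intervalIntegrable_iff_integrableOn_Ioo_of_le zero_le_one, ← image_sin_sq_Ioo,
    integrableOn_image_iff_integrableOn_deriv_smul_of_monotoneOn measurableSet_Ioo
      (fun θ _ => hasDerivWithinAt_sin_sq _) monotoneOn_sin_sq] at hbeta
  rw [intervalIntegrable_iff_integrableOn_Ioo_of_le (by positivity)]
  refine IntegrableOn.congr_fun ((hbeta.congr_fun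
    (fun θ hθ => deriv_sin_sq_smul_beta_integrand hθ a) measurableSet_Ioo).const_mul (1 / 2))
    (fun θ _ => ?_) measurableSet_Ioo
  ring

lemma integral_abs_sin_rpow_zero_pi_div_two (ha : -1 < a) :
    ∫ θ in (0:ℝ)..π / 2, |sin θ| ^ a = beta ((a + 1) / 2) (1 / 2) / 2 := by
  rw [← integral_rpow_mul_one_sub_rpow (by linarith) one_half_pos,
    intervalIntegral.integral_of_le zero_le_one, intervalIntegral.integral_of_le (by positivity),
    integral_Ioc_eq_integral_Ioo, integral_Ioc_eq_integral_Ioo, ← image_sin_sq_Ioo,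
    integral_image_eq_integral_deriv_smul_of_monotoneOn measurableSet_Ioo
      (fun θ _ => hasDerivWithinAt_sin_sq _) monotoneOn_sin_sq,
    setIntegral_congr_fun measurableSet_Ioo fun θ hθ => deriv_sin_sq_smul_beta_integrand hθ a,
    integral_const_mul]
  ring

lemma abs_sin_rpow_pi_sub (a : ℝ) : (fun θ => |sin (π - θ)| ^ a) = fun θ => |sin θ| ^ a := by
  simp only [sin_pi_sub]

lemma intervalIntegrable_abs_sin_rpow_pi_div_two_pi (ha : -1 < a) :
    IntervalIntegrable (fun θ => |sin θ| ^ a) volume (π / 2) π := by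
  have h := (intervalIntegrable_abs_sin_rpow_zero_pi_div_two ha).comp_sub_left π
  rw [abs_sin_rpow_pi_sub, sub_zero, show π - π / 2 = π / 2 by ring] at h
  exact h.symm

lemma integral_abs_sin_rpow_pi_div_two_pi (a : ℝ) :
    ∫ θ in π / 2..π, |sin θ| ^ a = ∫ θ in (0:ℝ)..π / 2, |sin θ| ^ a := by
  have h := intervalIntegral.integral_comp_sub_left (fun θ => |sin θ| ^ a) (a := 0) (b := π / 2) π
  rw [abs_sin_rpow_pi_sub, sub_zero, show π - π / 2 = π / 2 by ring] at h
  exact h.symm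

lemma intervalIntegrable_abs_sin_rpow_zero_pi (ha : -1 < a) :
    IntervalIntegrable (fun θ => |sin θ| ^ a) volume 0 π :=
  (intervalIntegrable_abs_sin_rpow_zero_pi_div_two ha).trans
    (intervalIntegrable_abs_sin_rpow_pi_div_two_pi ha)

lemma integral_abs_sin_rpow_zero_pi (ha : -1 < a) :
    ∫ θ in (0:ℝ)..π, |sin θ| ^ a = beta ((a + 1) / 2) (1 / 2) := by
  rw [← intervalIntegral.integral_add_adjacent_intervals
      (intervalIntegrable_abs_sin_rpow_zero_pi_div_two ha)
      (intervalIntegrable_abs_sin_rpow_pi_div_two_pi ha),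
    integral_abs_sin_rpow_pi_div_two_pi, integral_abs_sin_rpow_zero_pi_div_two ha]
  ring

lemma periodic_abs_sin_rpow (a : ℝ) : Function.Periodic (fun θ => |sin θ| ^ a) π := by
  simp [Function.Periodic, sin_add_pi]

lemma integral_abs_sin_rpow_zero_nat_mul_pi (ha : -1 < a) (n : ℕ) :
    ∫ θ in (0:ℝ)..n * π, |sin θ| ^ a = n * beta ((a + 1) / 2) (1 / 2) := by
  have h := (periodic_abs_sin_rpow a).intervalIntegral_add_zsmul_eq n 0
    ((periodic_abs_sin_rpow a).intervalIntegrable₀ pi_ne_zero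
      (intervalIntegrable_abs_sin_rpow_zero_pi ha))
  simp only [zero_add, zsmul_eq_mul, Int.cast_natCast] at h
  rw [h, integral_abs_sin_rpow_zero_pi ha]

lemma integral_abs_sin_nat_mul_div_two_rpow (ha : -1 < a) {N : ℕ} (hN : N ≠ 0) :
    ∫ θ in Ioc 0 (2 * π), |sin (N * θ / 2)| ^ a = 2 * beta ((a + 1) / 2) (1 / 2) := by
  have hN' : (N : ℝ) / 2 ≠ 0 := by positivity
  rw [← intervalIntegral.integral_of_le (by positivity)]
  simp_rw [mul_div_right_comm _ _ (2:ℝ)]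
  rw [intervalIntegral.integral_comp_mul_left (fun θ => |sin θ| ^ a) hN', mul_zero,
    show (N : ℝ) / 2 * (2 * π) = N * π by ring, integral_abs_sin_rpow_zero_nat_mul_pi ha,
    smul_eq_mul]
  field_simp

lemma mean_abs_sin_nat_mul_div_two_rpow (ha : -1 < a) {N : ℕ} (hN : N ≠ 0) :
    1 / (2 * π) * ∫ θ in Ioc 0 (2 * π), |sin (N * θ / 2)| ^ a
      = 1 / π * beta ((a + 1) / 2) (1 / 2) := by
  rw [integral_abs_sin_nat_mul_div_two_rpow ha hN]
  field_simp

end SinePower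

lemma beta_one_half_right (s : ℝ) :
    beta s (1 / 2) = 2 ^ (1 - 2 * s) * π * Gamma (2 * s) / Gamma (s + 1 / 2) ^ 2 := by
  rw [beta]
  rcases eq_or_ne (Gamma (s + 1 / 2)) 0 with h | h
  · rw [h]; simp
  · rw [div_eq_div_iff h (pow_ne_zero 2 h), Gamma_one_half_eq]
    linear_combination (√π * Gamma (s + 1 / 2)) * Gamma_mul_Gamma_add_half s
      + (2 ^ (1 - 2 * s) * Gamma (2 * s) * Gamma (s + 1 / 2)) * mul_self_sqrt pi_pos.le

lemma sqrt_beta_ratio (x : ℝ) :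
    √((1 / π * beta (1 / 2 - 2 * x) (1 / 2)) / (1 / π * beta (1 / 2 - x) (1 / 2)) ^ 2)
      = √(Gamma (1 - 4 * x)) * Gamma (1 - x) ^ 2 / Gamma (1 - 2 * x) ^ 2 := by
  have hratio : (1 / π * beta (1 / 2 - 2 * x) (1 / 2)) / (1 / π * beta (1 / 2 - x) (1 / 2)) ^ 2
      = Gamma (1 - 4 * x) * (Gamma (1 - x) ^ 2 / Gamma (1 - 2 * x) ^ 2) ^ 2 := by
    have h2 : ((2:ℝ) ^ (2 * x)) ^ 2 = 2 ^ (4 * x) := by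
      rw [← rpow_mul_natCast zero_le_two]; ring_nf
    rw [beta_one_half_right, beta_one_half_right, show 1 - 2 * (1 / 2 - 2 * x) = 4 * x by ring,
      show 1 - 2 * (1 / 2 - x) = 2 * x by ring, show 2 * (1 / 2 - 2 * x) = 1 - 4 * x by ring,
      show 2 * (1 / 2 - x) = 1 - 2 * x by ring, show 1 / 2 - 2 * x + 1 / 2 = 1 - 2 * x by ring,
      show 1 / 2 - x + 1 / 2 = 1 - x by ring, ← h2]
    have hπ : π ≠ 0 := pi_ne_zero
    have h2x : (2:ℝ) ^ (2 * x) ≠ 0 := by positivity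
    field_simp
  rw [hratio, sqrt_mul' _ (by positivity), sqrt_sq (by positivity), mul_div_assoc]

/-- for the Schwarz–Christoffel boundary weight `p(θ) = |sin(Nθ/2)|^{−2/N}` of
the regular `N`-gon (`N ≥ 5`), the first two moments are beta-function values, and the
conformal geometric factor equals `Γ(1−4/N)^{1/2} Γ(1−1/N)² / Γ(1−2/N)²`.  Here the Euler
beta function is `B(a,b) = Γ(a)Γ(b)/Γ(a+b)`. -/
theorem stmt_16 (N : ℕ) (hN : 5 ≤ N) :
    let p : ℝ → ℝ := fun θ => |Real.sin (N * θ / 2)| ^ (-(2 / (N:ℝ)))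
    let B : ℝ → ℝ → ℝ := fun a b => Real.Gamma a * Real.Gamma b / Real.Gamma (a + b)
    (1/(2*π)) * (∫ θ in Set.Ioc (0:ℝ) (2*π), p θ) = (1/π) * B (1/2 - 1/(N:ℝ)) (1/2) ∧
    (1/(2*π)) * (∫ θ in Set.Ioc (0:ℝ) (2*π), (p θ)^2) = (1/π) * B (1/2 - 2/(N:ℝ)) (1/2) ∧
    Real.sqrt (((1/(2*π)) * ∫ θ in Set.Ioc (0:ℝ) (2*π), (p θ)^2) /
        ((1/(2*π)) * ∫ θ in Set.Ioc (0:ℝ) (2*π), p θ)^2) =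
      Real.sqrt (Real.Gamma (1 - 4/(N:ℝ))) * Real.Gamma (1 - 1/(N:ℝ))^2
        / Real.Gamma (1 - 2/(N:ℝ))^2 := by
  intro p B
  have hN0 : N ≠ 0 := by omega
  have hN5 : (5:ℝ) ≤ N := by exact_mod_cast hN
  have hp_sq (θ : ℝ) : p θ ^ 2 = |sin (N * θ / 2)| ^ (-(4 / (N:ℝ))) := by
    rw [← rpow_mul_natCast (abs_nonneg _)]
    ring_nf
  have hexp (c : ℝ) (hc : c < 5) : -1 < -(c / N) := by
    rw [neg_lt_neg_iff, div_lt_one (by positivity)]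
    linarith
  have hmean₁ : (1/(2*π)) * (∫ θ in Ioc (0:ℝ) (2*π), p θ) = (1/π) * beta (1/2 - 1/(N:ℝ)) (1/2) := by
    rw [mean_abs_sin_nat_mul_div_two_rpow (hexp 2 (by norm_num)) hN0,
      show (-(2 / (N:ℝ)) + 1) / 2 = 1 / 2 - 1 / N by ring]
  have hmean₂ : (1/(2*π)) * (∫ θ in Ioc (0:ℝ) (2*π), p θ ^ 2)
      = (1/π) * beta (1/2 - 2/(N:ℝ)) (1/2) := by
    simp_rw [hp_sq]
    rw [mean_abs_sin_nat_mul_div_two_rpow (hexp 4 (by norm_num)) hN0,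
      show (-(4 / (N:ℝ)) + 1) / 2 = 1 / 2 - 2 / N by ring]
  refine ⟨hmean₁, hmean₂, ?_⟩
  rw [hmean₁, hmean₂]
  simpa only [mul_one_div] using sqrt_beta_ratio (1 / N)
end

section
/- Let 0 ≤ ε < 1 and define R(θ) = √(1 − ε²)/√(1 − ε² cos²θ) for θ ∈ [0, 2π]. Then 1 + (1/2π)∫₀^{2π} (R′(θ)/R(θ))² dθ = (1 − ε²/2)/√(1 − ε²), and (1/2π)∫₀^{2π} ( R(θ)² + R′(θ)² ) dθ = (1 − ε² + ε⁴/8)/√(1 − ε²). -/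
/-!
Write `k = ε²` and `u = 1 - k cos² θ`. Then `R′/R = -k sin θ cos θ / u`, and since
`k cos² θ = 1 - u` and `k sin² θ = u - (1 - k)`, both integrands are linear combinations of the
powers `u⁻ⁿ`. Their integrals `Jₙ` over a period satisfy a three-term recurrence, obtained by
integrating the derivative of the periodic function `k sin θ cos θ / uⁿ⁺¹`, and `J₁ = 2π/√(1 - k)`
because a continuous branch of `arctan (tan θ / √(1 - k))` is an antiderivative of `√(1 - k)/u`.
-/

open MeasureTheory intervalIntegral
open scoped Real
open Real

lemma sin_sq_add_mul_cos_sq_pos {a : ℝ} (ha : 0 < a) (θ : ℝ) :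
    0 < sin θ ^ 2 + a * cos θ ^ 2 := by
  nlinarith [mul_nonneg (mul_nonneg ha.le ha.le) (sq_nonneg (cos θ)), sq_nonneg (sin θ),
    sin_sq_add_cos_sq θ]

lemma hasDerivAt_sin_mul_cos (θ : ℝ) :
    HasDerivAt (fun t => sin t * cos t) (cos θ ^ 2 - sin θ ^ 2) θ :=
  ((hasDerivAt_sin θ).mul (hasDerivAt_cos θ)).congr_deriv (by ring)

-- The function is a continuous branch of `arctan (tan θ / b)`.
lemma hasDerivAt_ellipseAngle {b : ℝ} (hb : 0 < b) (θ : ℝ) :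
    HasDerivAt (fun t => t - arctan ((b - 1) * (sin t * cos t) / (sin t ^ 2 + b * cos t ^ 2)))
      (b / (sin θ ^ 2 + b ^ 2 * cos θ ^ 2)) θ := by
  have hs : sin θ ^ 2 = 1 - cos θ ^ 2 := by linarith [sin_sq_add_cos_sq θ]
  have hD := sin_sq_add_mul_cos_sq_pos hb θ
  have hE := sin_sq_add_mul_cos_sq_pos (pow_pos hb 2) θ
  have hDen : HasDerivAt (fun t => sin t ^ 2 + b * cos t ^ 2)
      (2 * (1 - b) * (sin θ * cos θ)) θ :=
    (((hasDerivAt_sin θ).pow 2).add (((hasDerivAt_cos θ).pow 2).const_mul b)).congr_deriv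
      (by push_cast; ring)
  refine ((hasDerivAt_id θ).sub
    (((hasDerivAt_sin_mul_cos θ).const_mul (b - 1)).div hDen hD.ne').arctan).congr_deriv ?_
  simp only [Pi.div_apply]
  field_simp
  rw [hs] at hD hE ⊢
  field_simp
  ring

lemma hasDerivAt_one_sub_mul_cos_sq (k θ : ℝ) :
    HasDerivAt (fun t => 1 - k * cos t ^ 2) (2 * k * (sin θ * cos θ)) θ :=
  ((hasDerivAt_const θ (1 : ℝ)).sub (((hasDerivAt_cos θ).pow 2).const_mul k)).congr_deriv
    (by push_cast; ring)

section
variable {k : ℝ}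

lemma one_sub_mul_cos_sq_pos (hk : k < 1) (θ : ℝ) : 0 < 1 - k * cos θ ^ 2 := by
  nlinarith [sin_sq_add_mul_cos_sq_pos (sub_pos.2 hk) θ, sin_sq_add_cos_sq θ]

lemma hasDerivAt_sin_mul_cos_div_pow (hk : k < 1) (n : ℕ) (θ : ℝ) :
    HasDerivAt (fun t => k * (sin t * cos t) / (1 - k * cos t ^ 2) ^ (n + 1))
      (2 * n * ((1 - k * cos θ ^ 2) ^ n)⁻¹
        - (2 * n + 1) * (2 - k) * ((1 - k * cos θ ^ 2) ^ (n + 1))⁻¹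
        + 2 * (n + 1) * (1 - k) * ((1 - k * cos θ ^ 2) ^ (n + 2))⁻¹) θ := by
  have hu := (one_sub_mul_cos_sq_pos hk θ).ne'
  have hs : sin θ ^ 2 = 1 - cos θ ^ 2 := by linarith [sin_sq_add_cos_sq θ]
  refine (((hasDerivAt_sin_mul_cos θ).const_mul k).div
    ((hasDerivAt_one_sub_mul_cos_sq k θ).pow (n + 1)) (pow_ne_zero _ hu)).congr_deriv ?_
  simp only [Pi.pow_apply]
  field_simp
  rw [hs]
  push_cast
  ring

noncomputable def ellipseMoment (k : ℝ) (n : ℕ) : ℝ :=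
  ∫ θ in (0 : ℝ)..2 * π, ((1 - k * cos θ ^ 2) ^ n)⁻¹

lemma intervalIntegrable_inv_pow_one_sub_mul_cos_sq (hk : k < 1) (n : ℕ) (a b : ℝ) :
    IntervalIntegrable (fun θ => ((1 - k * cos θ ^ 2) ^ n)⁻¹) volume a b :=
  (Continuous.inv₀ (by fun_prop) fun θ => pow_ne_zero n (one_sub_mul_cos_sq_pos hk θ).ne')
    |>.intervalIntegrable a b

lemma ellipseMoment_zero : ellipseMoment k 0 = 2 * π := by
  simp [ellipseMoment]

lemma ellipseMoment_one (hk : k < 1) : ellipseMoment k 1 = 2 * π / √(1 - k) := by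
  have hb : 0 < √(1 - k) := sqrt_pos.2 (sub_pos.2 hk)
  have hderiv (θ : ℝ) := (hasDerivAt_ellipseAngle hb θ).congr_deriv
    (g' := √(1 - k) * ((1 - k * cos θ ^ 2) ^ 1)⁻¹) (by
      rw [sq_sqrt (sub_pos.2 hk).le, pow_one, div_eq_mul_inv]
      congr 2
      linarith [sin_sq_add_cos_sq θ])
  have hFTC := integral_eq_sub_of_hasDerivAt (fun θ _ => hderiv θ)
    ((intervalIntegrable_inv_pow_one_sub_mul_cos_sq hk 1 0 (2 * π)).const_mul (√(1 - k)))
  simp only [intervalIntegral.integral_const_mul, sin_zero, sin_two_pi, zero_mul, mul_zero,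
    zero_div, arctan_zero, sub_zero] at hFTC
  rw [ellipseMoment, eq_div_iff hb.ne', mul_comm, hFTC]

lemma ellipseMoment_recurrence (hk : k < 1) (n : ℕ) :
    2 * (n + 1) * (1 - k) * ellipseMoment k (n + 2)
      = (2 * n + 1) * (2 - k) * ellipseMoment k (n + 1) - 2 * n * ellipseMoment k n := by
  have hint (m : ℕ) := intervalIntegrable_inv_pow_one_sub_mul_cos_sq hk m 0 (2 * π)
  have hFTC := integral_eq_sub_of_hasDerivAt (fun θ _ => hasDerivAt_sin_mul_cos_div_pow hk n θ)
    ((((hint n).const_mul _).sub ((hint (n + 1)).const_mul _)).add ((hint (n + 2)).const_mul _))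
  rw [integral_add (((hint n).const_mul _).sub ((hint (n + 1)).const_mul _))
      ((hint (n + 2)).const_mul _),
    integral_sub ((hint n).const_mul _) ((hint (n + 1)).const_mul _)] at hFTC
  simp only [intervalIntegral.integral_const_mul, sin_zero, sin_two_pi, zero_mul, mul_zero,
    zero_div, sub_zero] at hFTC
  simp only [ellipseMoment]
  linarith

-- The polar radius of the ellipse with semi-axes `1` and `√(1 - k)`; `k` is the squared
-- eccentricity.
noncomputable def ellipseRadius (k θ : ℝ) : ℝ := √(1 - k) / √(1 - k * cos θ ^ 2)

lemma hasDerivAt_ellipseRadius (hk : k < 1) (θ : ℝ) :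
    HasDerivAt (ellipseRadius k)
      (ellipseRadius k θ * -(k * (sin θ * cos θ) / (1 - k * cos θ ^ 2))) θ := by
  have hu := one_sub_mul_cos_sq_pos hk θ
  refine ((hasDerivAt_const θ (√(1 - k))).div ((hasDerivAt_one_sub_mul_cos_sq k θ).sqrt hu.ne')
    (sqrt_pos.2 hu).ne').congr_deriv ?_
  rw [ellipseRadius]
  field_simp
  rw [sq_sqrt hu.le]
  ring

lemma logDeriv_ellipseRadius (hk : k < 1) (θ : ℝ) :
    deriv (ellipseRadius k) θ / ellipseRadius k θ
      = -(k * (sin θ * cos θ) / (1 - k * cos θ ^ 2)) := by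
  have hR : ellipseRadius k θ ≠ 0 :=
    (div_pos (sqrt_pos.2 (sub_pos.2 hk)) (sqrt_pos.2 (one_sub_mul_cos_sq_pos hk θ))).ne'
  rw [(hasDerivAt_ellipseRadius hk θ).deriv, mul_div_cancel_left₀ _ hR]

lemma sq_logDeriv_ellipseRadius (hk : k < 1) (θ : ℝ) :
    (deriv (ellipseRadius k) θ / ellipseRadius k θ) ^ 2
      = (2 - k) * ((1 - k * cos θ ^ 2) ^ 1)⁻¹ - (1 - k) * ((1 - k * cos θ ^ 2) ^ 2)⁻¹ - 1 := by
  have hu := (one_sub_mul_cos_sq_pos hk θ).ne'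
  rw [logDeriv_ellipseRadius hk]
  field_simp
  linear_combination k ^ 2 * cos θ ^ 2 * sin_sq_add_cos_sq θ

lemma ellipseRadius_sq_add_deriv_sq (hk : k < 1) (θ : ℝ) :
    ellipseRadius k θ ^ 2 + deriv (ellipseRadius k) θ ^ 2
      = (1 - k) * (2 - k) * ((1 - k * cos θ ^ 2) ^ 2)⁻¹
        - (1 - k) ^ 2 * ((1 - k * cos θ ^ 2) ^ 3)⁻¹ := by
  have hu := one_sub_mul_cos_sq_pos hk θ
  have hR2 : ellipseRadius k θ ^ 2 = (1 - k) * ((1 - k * cos θ ^ 2) ^ 1)⁻¹ := by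
    rw [ellipseRadius, div_pow, sq_sqrt (sub_pos.2 hk).le, sq_sqrt hu.le, pow_one, div_eq_mul_inv]
  rw [(hasDerivAt_ellipseRadius hk θ).deriv, mul_pow, hR2]
  field_simp
  linear_combination k ^ 2 * (1 - k) * cos θ ^ 2 * sin_sq_add_cos_sq θ

lemma integral_sq_logDeriv_ellipseRadius (hk : k < 1) :
    ∫ θ in (0 : ℝ)..2 * π, (deriv (ellipseRadius k) θ / ellipseRadius k θ) ^ 2
      = (2 - k) * ellipseMoment k 1 - (1 - k) * ellipseMoment k 2 - 2 * π := by
  have hint (m : ℕ) := intervalIntegrable_inv_pow_one_sub_mul_cos_sq hk m 0 (2 * π)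
  simp_rw [sq_logDeriv_ellipseRadius hk]
  rw [integral_sub (((hint 1).const_mul _).sub ((hint 2).const_mul _)) intervalIntegrable_const,
    integral_sub ((hint 1).const_mul _) ((hint 2).const_mul _)]
  simp [ellipseMoment]

lemma integral_ellipseRadius_sq_add_deriv_sq (hk : k < 1) :
    ∫ θ in (0 : ℝ)..2 * π, ellipseRadius k θ ^ 2 + deriv (ellipseRadius k) θ ^ 2
      = (1 - k) * (2 - k) * ellipseMoment k 2 - (1 - k) ^ 2 * ellipseMoment k 3 := by
  have hint (m : ℕ) := intervalIntegrable_inv_pow_one_sub_mul_cos_sq hk m 0 (2 * π)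
  simp_rw [ellipseRadius_sq_add_deriv_sq hk]
  rw [integral_sub ((hint 2).const_mul _) ((hint 3).const_mul _)]
  simp [ellipseMoment]

end

/-- for the radius function `R(θ) = √(1−ε²)/√(1−ε² cos²θ)` of the ellipse of
eccentricity `ε ∈ [0,1)`, one has `1 + (1/2π)∫₀^{2π} (R′/R)² dθ = (1 − ε²/2)/√(1 − ε²)` and
`(1/2π)∫₀^{2π} (R² + R′²) dθ = (1 − ε² + ε⁴/8)/√(1 − ε²)`. -/
theorem stmt_18 (ε : ℝ) (hε0 : 0 ≤ ε) (hε1 : ε < 1) :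
    let R : ℝ → ℝ := fun θ => Real.sqrt (1 - ε^2) / Real.sqrt (1 - ε^2 * Real.cos θ ^ 2)
    1 + (1/(2*π)) * (∫ θ in (0:ℝ)..(2*π), (deriv R θ / R θ)^2)
      = (1 - ε^2/2) / Real.sqrt (1 - ε^2) ∧
    (1/(2*π)) * (∫ θ in (0:ℝ)..(2*π), ((R θ)^2 + (deriv R θ)^2))
      = (1 - ε^2 + ε^4/8) / Real.sqrt (1 - ε^2) := by
  intro R
  rw [show R = ellipseRadius (ε ^ 2) from rfl]
  have hk : ε ^ 2 < 1 := by nlinarith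
  rw [integral_sq_logDeriv_ellipseRadius hk, integral_ellipseRadius_sq_add_deriv_sq hk]
  have hJ1 := ellipseMoment_one hk
  have hJ2 := ellipseMoment_recurrence hk 0
  have hJ3 := ellipseMoment_recurrence hk 1
  have ha : 1 - ε ^ 2 ≠ 0 := (sub_pos.2 hk).ne'
  have hb : √(1 - ε ^ 2) ≠ 0 := (sqrt_pos.2 (sub_pos.2 hk)).ne'
  norm_num [ellipseMoment_zero] at hJ2 hJ3
  rw [mul_comm, ← eq_div_iff (by positivity)] at hJ2 hJ3
  rw [hJ3, hJ2, hJ1]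
  constructor <;> field_simp <;> ring
end
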